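/- arXiv:1709.05137 — 3 statements merged into one kernel-verified Lean document; each statement's English description precedes it below -/
import Mathlib

section
/- Fix i ∈ {1,…,d} and let f : ℤ^d → ℝ be a bounded function such that f(x) − f(x+e_i) ≥ 0 for all x ∈ ℤ^d with ⟨x,e_i⟩ ≥ 0, and such that f(x) = f(x̃_i) for all x, where x̃_i denotes x with its i-th coordinate negated. Define the heat evolution f(t,x) := Σ_{z∈ℤ^d} p(t, x−z) f(z). Then for every t ≥ 0 both properties are preserved: f(t,x) = f(t, x̃_i) for all x, and f(t,x) − f(t,x+e_i) ≥ 0 for all x with ⟨x,e_i⟩ > 0. -/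
open scoped Real BigOperators

noncomputable section

/-- Euclidean norm of a lattice point of `ℤ^d`. -/
def enorm' (d : ℕ) (x : Fin d → ℤ) : ℝ := Real.sqrt (∑ j, ((x j : ℝ)) ^ 2)

/-- The Fourier symbol `α(ξ) = ∑_j 2(cos(2πξ_j) − 1)` of the discrete Laplacian. -/
def alphaFn (d : ℕ) (ξ : Fin d → ℝ) : ℝ := ∑ j, 2 * (Real.cos (2 * Real.pi * ξ j) - 1)

/-- Heat kernel `p(t,x)` of the rate-`γ` continuous-time simple random walk on `ℤ^d`. -/
def heatKernel (d : ℕ) (γ t : ℝ) (x : Fin d → ℤ) : ℝ :=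
  ∫ ξ in Set.Icc (0 : Fin d → ℝ) 1,
    Real.exp (γ * t * alphaFn d ξ) * Real.cos (2 * Real.pi * ∑ j, ξ j * (x j : ℝ))

open Classical in
/-- The ball `B_M = {y ∈ ℤ^d : ‖y‖ ≤ M}` as a finite set. -/
def latticeBall (d M : ℕ) : Finset (Fin d → ℤ) :=
  (Fintype.piFinset fun _ : Fin d => Finset.Icc (-(M : ℤ)) M).filter
    (fun y => enorm' d y ≤ M)

/-- Ball-averaged heat kernel `p_M(t,x) = |B_M|⁻¹ ∑_{y ∈ B_M} p(t,x+y)`. -/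
def pAvg (d : ℕ) (γ t : ℝ) (M : ℕ) (x : Fin d → ℤ) : ℝ :=
  ((latticeBall d M).card : ℝ)⁻¹ * ∑ y ∈ latticeBall d M, heatKernel d γ t (x + y)

open Classical in
/-- The `n`-th crown `C_n = {z ∈ ℤ^d : n−1 < ‖z‖ ≤ n}` as a finite set. -/
def crown (d n : ℕ) : Finset (Fin d → ℤ) :=
  (Fintype.piFinset fun _ : Fin d => Finset.Icc (-(n : ℤ)) n).filter
    (fun z => (n : ℝ) - 1 < enorm' d z ∧ enorm' d z ≤ n)

/-- `p⁺_M(t,n) = max_{z ∈ C_n} p_M(t,z)`. -/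
def pPlus (d : ℕ) (γ t : ℝ) (M n : ℕ) : ℝ :=
  sSup (pAvg d γ t M '' (crown d n : Set (Fin d → ℤ)))

/-- `p⁻_M(t,n) = min_{z ∈ C_n} p_M(t,z)`. -/
def pMinus (d : ℕ) (γ t : ℝ) (M n : ℕ) : ℝ :=
  sInf (pAvg d γ t M '' (crown d n : Set (Fin d → ℤ)))

/-- `E_M(t,n) = p⁺_M(t,n) − p⁻_M(t,n)`. -/
def oscE (d : ℕ) (γ t : ℝ) (M n : ℕ) : ℝ := pPlus d γ t M n - pMinus d γ t M n

/-- Index `n(y)` of the crown containing `y`. -/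
def crownIdx (d : ℕ) (y : Fin d → ℤ) : ℕ := ⌈enorm' d y⌉₊


namespace ClaimA1
open Complex MeasureTheory


def aa (s : ℝ) (k : ℕ) : ℝ := s ^ k / k.factorial

lemma aa_nonneg {s : ℝ} (hs : 0 ≤ s) (k : ℕ) : 0 ≤ aa s k :=
  div_nonneg (pow_nonneg hs k) (Nat.cast_nonneg _)

lemma summable_aa (s : ℝ) : Summable (aa s) := Real.summable_pow_div_factorial s

def Ea (s : ℝ) : ℝ := ∑' k, aa s k

lemma aa_le_Ea {s : ℝ} (hs : 0 ≤ s) (k : ℕ) : aa s k ≤ Ea s :=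
  Summable.le_tsum (summable_aa s) k (fun j _ => aa_nonneg hs j)

lemma aa_add_le {s : ℝ} (hs : 0 ≤ s) (k m : ℕ) : aa s (k + m) ≤ aa s m * aa s k := by
  unfold aa
  rw [div_mul_div_comm, ← pow_add, add_comm m k, ← Nat.cast_mul]
  apply div_le_div_of_nonneg_left (pow_nonneg hs _) (by positivity)
  exact_mod_cast Nat.le_of_dvd (Nat.factorial_pos _) (by
    have := Nat.factorial_mul_factorial_dvd_factorial_add m k
    rwa [add_comm m k] at this)

lemma t_le {s : ℝ} (hs : 0 ≤ s) (m : ℕ) (k : ℕ) :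
    aa s k * aa s (k + m) ≤ (aa s m * Ea s) * aa s k := by
  calc aa s k * aa s (k + m) ≤ aa s k * (aa s m * aa s k) :=
      mul_le_mul_of_nonneg_left (aa_add_le hs k m) (aa_nonneg hs k)
    _ ≤ aa s k * (aa s m * Ea s) :=
      mul_le_mul_of_nonneg_left
        (mul_le_mul_of_nonneg_left (aa_le_Ea hs k) (aa_nonneg hs m)) (aa_nonneg hs k)
    _ = (aa s m * Ea s) * aa s k := by ring

lemma summable_t {s : ℝ} (hs : 0 ≤ s) (m : ℕ) :
    Summable (fun k => aa s k * aa s (k + m)) :=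
  Summable.of_nonneg_of_le (fun k => mul_nonneg (aa_nonneg hs k) (aa_nonneg hs _))
    (t_le hs m) ((summable_aa s).mul_left _)

def cc (s : ℝ) (m : ℕ) : ℝ := ∑' k, aa s k * aa s (k + m)

lemma cc_nonneg {s : ℝ} (hs : 0 ≤ s) (m : ℕ) : 0 ≤ cc s m :=
  tsum_nonneg fun k => mul_nonneg (aa_nonneg hs k) (aa_nonneg hs _)

lemma cc_le {s : ℝ} (hs : 0 ≤ s) (m : ℕ) : cc s m ≤ (Ea s * Ea s) * aa s m := by
  calc cc s m ≤ ∑' k, (aa s m * Ea s) * aa s k :=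
        Summable.tsum_le_tsum (t_le hs m) (summable_t hs m) ((summable_aa s).mul_left _)
    _ = (Ea s * Ea s) * aa s m := by rw [tsum_mul_left]; unfold Ea; ring

lemma aa_succ (s : ℝ) (n : ℕ) : aa s (n+1) = aa s n * s / ((n:ℝ)+1) := by
  unfold aa
  rw [Nat.factorial_succ, pow_succ]
  push_cast
  have h1 : ((n.factorial : ℝ)) ≠ 0 := by positivity
  have h2 : ((n:ℝ)+1) ≠ 0 := by positivity
  field_simp

lemma key_real {s A B K M : ℝ} (hs : 0 ≤ s) (hA : 0 ≤ A) (hB : 0 ≤ B) (hK : 0 < K)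
    (hKM : K ≤ M) :
    2 * (A * (B * s / M)) ≤ A * B + (A * s / K) * (B * s / M) := by
  have hM : 0 < M := hK.trans_le hKM
  have key : 2*s*K ≤ K*M + s^2 := by nlinarith [sq_nonneg (s-K)]
  rw [← sub_nonneg]
  have hEq : A * B + A * s / K * (B * s / M) - 2 * (A * (B * s / M))
      = (A*B)/(K*M)*((K*M + s^2) - 2*s*K) := by
    field_simp
  rw [hEq]
  apply mul_nonneg (div_nonneg (mul_nonneg hA hB) (le_of_lt (mul_pos hK hM)))
  linarith

lemma key_ineq {s : ℝ} (hs : 0 ≤ s) (k m : ℕ) :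
    2 * (aa s k * aa s (k + (m+1))) ≤
      aa s k * aa s (k + m) + aa s (k+1) * aa s ((k+1) + m) := by
  have e1 : k + (m+1) = (k+m) + 1 := by ring
  have e2 : (k+1) + m = (k+m) + 1 := by ring
  rw [e1, e2, aa_succ s (k+m), aa_succ s k]
  have := key_real (A := aa s k) (B := aa s (k+m)) (K := (k:ℝ)+1) (M := ((k+m:ℕ):ℝ)+1)
    hs (aa_nonneg hs k) (aa_nonneg hs (k+m)) (by positivity) (by push_cast; linarith [Nat.cast_nonneg (α := ℝ) m])
  calc 2 * (aa s k * (aa s (k+m) * s / (((k+m:ℕ):ℝ)+1)))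
      ≤ aa s k * aa s (k+m) + (aa s k * s / ((k:ℝ)+1)) * (aa s (k+m) * s / (((k+m:ℕ):ℝ)+1)) := this
    _ = aa s k * aa s (k+m) + aa s k * s / ((k:ℝ)+1) * (aa s (k+m) * s / (((k+m:ℕ):ℝ)+1)) := by ring

lemma cc_succ_le {s : ℝ} (hs : 0 ≤ s) (m : ℕ) : cc s (m+1) ≤ cc s m := by
  have hu : Summable (fun k => aa s k * aa s (k + (m+1))) := summable_t hs (m+1)
  have ht : Summable (fun k => aa s k * aa s (k + m)) := summable_t hs m
  have ht' : Summable (fun k : ℕ => aa s (k+1) * aa s ((k+1) + m)) := by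
    have := ht.comp_injective (add_left_injective 1)
    exact this
  have hsum : Summable (fun k : ℕ =>
      (aa s k * aa s (k + m) + aa s (k+1) * aa s ((k+1) + m)) / 2) := (ht.add ht').div_const 2
  have h1 : cc s (m+1) ≤
      ∑' k : ℕ, (aa s k * aa s (k + m) + aa s (k+1) * aa s ((k+1) + m)) / 2 := by
    have hccu : cc s (m+1) = ∑' k, aa s k * aa s (k+(m+1)) := rfl
    rw [hccu]
    refine Summable.tsum_le_tsum (fun k => ?_) hu hsum
    have := key_ineq hs k m
    linarith
  have h2 : ∑' k : ℕ, (aa s k * aa s (k + m) + aa s (k+1) * aa s ((k+1) + m)) / 2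
      = (cc s m + ∑' k : ℕ, aa s (k+1) * aa s ((k+1) + m)) / 2 := by
    rw [tsum_div_const, Summable.tsum_add ht ht']
    rfl
  have h3 : ∑' k : ℕ, aa s (k+1) * aa s ((k+1) + m) ≤ cc s m := by
    have hccm : cc s m = ∑' k, aa s k * aa s (k + m) := rfl
    rw [hccm]
    exact Summable.tsum_le_tsum_of_inj (fun k => k+1) (add_left_injective 1)
      (fun c _ => mul_nonneg (aa_nonneg hs c) (aa_nonneg hs _))
      (fun k => le_rfl) ht' ht
  linarith




lemma hasSum_cexp (z : ℂ) : HasSum (fun n : ℕ => z ^ n / n.factorial) (Complex.exp z) := by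
  rw [Complex.exp_eq_exp_ℂ]
  exact NormedSpace.expSeries_div_hasSum_exp z

lemma hasSum_exp_cos (s : ℝ) (m : ℤ) (u : ℝ) :
    HasSum (fun jk : ℕ × ℕ => ((aa s jk.1 * aa s jk.2 : ℝ) : ℂ) *
        Complex.exp ((((jk.1 : ℤ) - (jk.2 : ℤ) + m : ℤ) : ℂ) * (2*(π:ℝ)*u) * Complex.I))
      (Complex.exp (2 * s * Real.cos (2*(π:ℝ)*u)) *
        Complex.exp ((m:ℂ) * (2*(π:ℝ)*u) * Complex.I)) := by
  set θ : ℝ := 2*(π:ℝ)*u with hθ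
  set z : ℂ := (s:ℂ) * Complex.exp ((θ:ℂ) * Complex.I) with hz
  set w : ℂ := (s:ℂ) * Complex.exp (-(θ:ℂ) * Complex.I) with hw
  have h1 : HasSum (fun n : ℕ => z ^ n / n.factorial) (Complex.exp z) := hasSum_cexp z
  have h2 : HasSum (fun n : ℕ => w ^ n / n.factorial) (Complex.exp w) := hasSum_cexp w
  have habs : ∀ ζ : ℂ, ζ.re = 0 → ‖Complex.exp ζ‖ = 1 := by
    intro ζ h; rw [Complex.norm_exp, h, Real.exp_zero]
  have hnz : ∀ n : ℕ, ‖z ^ n / (n.factorial : ℂ)‖ = |s| ^ n / n.factorial := by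
    intro n
    rw [norm_div, norm_pow, hz]
    simp only [norm_mul, Complex.norm_real, Real.norm_eq_abs]
    rw [habs _ (by simp), Complex.norm_natCast]
    simp
  have hnw : ∀ n : ℕ, ‖w ^ n / (n.factorial : ℂ)‖ = |s| ^ n / n.factorial := by
    intro n
    rw [norm_div, norm_pow, hw]
    simp only [norm_mul, Complex.norm_real, Real.norm_eq_abs]
    rw [habs _ (by simp), Complex.norm_natCast]
    simp
  have hsn : Summable (fun jk : ℕ × ℕ => (z ^ jk.1 / (jk.1.factorial : ℂ)) * (w ^ jk.2 / (jk.2.factorial : ℂ))) := by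
    apply Summable.of_norm
    have : Summable (fun n : ℕ => |s| ^ n / (n.factorial : ℝ)) := Real.summable_pow_div_factorial _
    have h := this.mul_of_nonneg this (fun n => by positivity) (fun n => by positivity)
    apply Summable.congr h
    intro jk
    rw [norm_mul, hnz, hnw]
  have hmul := (h1.mul h2 hsn).mul_right (Complex.exp ((m:ℂ) * (θ:ℂ) * Complex.I))
  have hexp : Complex.exp z * Complex.exp w * Complex.exp ((m:ℂ) * (θ:ℂ) * Complex.I)
      = Complex.exp (2 * s * Real.cos θ) * Complex.exp ((m:ℂ) * (θ:ℂ) * Complex.I) := by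
    rw [← Complex.exp_add, hz, hw]
    congr 1
    have : (s:ℂ) * Complex.exp ((θ:ℂ) * Complex.I) + (s:ℂ) * Complex.exp (-(θ:ℂ) * Complex.I)
        = (s:ℂ) * (2 * Complex.cos (θ:ℂ)) := by
      rw [Complex.two_cos]; ring
    rw [this, ← Complex.ofReal_cos]
    push_cast; ring
  rw [hexp] at hmul
  have hterm : (fun jk : ℕ × ℕ => (z ^ jk.1 / (jk.1.factorial : ℂ)) * (w ^ jk.2 / (jk.2.factorial : ℂ))
        * Complex.exp ((m:ℂ) * (θ:ℂ) * Complex.I))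
      = (fun jk : ℕ × ℕ => ((aa s jk.1 * aa s jk.2 : ℝ) : ℂ) *
        Complex.exp ((((jk.1 : ℤ) - (jk.2 : ℤ) + m : ℤ) : ℂ) * (θ:ℂ) * Complex.I)) := by
    funext jk
    obtain ⟨j, k⟩ := jk
    simp only [hz, hw]
    rw [mul_pow, mul_pow, ← Complex.exp_nat_mul, ← Complex.exp_nat_mul]
    unfold aa
    push_cast
    rw [show ((j:ℂ) - (k:ℂ) + (m:ℂ)) * (θ:ℂ) * Complex.I
        = (j:ℂ) * ((θ:ℂ) * Complex.I) + ((k:ℂ) * (-(θ:ℂ) * Complex.I) + (m:ℂ) * (θ:ℂ) * Complex.I) by ring]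
    rw [Complex.exp_add, Complex.exp_add]
    ring
  rw [hterm] at hmul
  have hθc : ((θ:ℝ):ℂ) = 2*(π:ℝ)*(u:ℂ) := by rw [hθ]; push_cast; ring
  rw [hθc] at hmul
  exact hmul



lemma integral_cexp_int (n : ℤ) :
    ∫ u in Set.Icc (0:ℝ) 1, Complex.exp ((n:ℂ) * (2*(π:ℝ)*u) * Complex.I) =
      if n = 0 then 1 else 0 := by
  rw [MeasureTheory.integral_Icc_eq_integral_Ioc, ← intervalIntegral.integral_of_le zero_le_one]
  by_cases hn : n = 0
  · simp [hn]
  · have hc : ((n:ℂ) * (2*(π:ℝ)) * Complex.I) ≠ 0 := by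
      simp [Complex.ext_iff, hn, Real.pi_ne_zero]
    have harg : ∀ u : ℝ, (n:ℂ) * (2*(π:ℝ)*u) * Complex.I = ((n:ℂ) * (2*(π:ℝ)) * Complex.I) * u := by
      intro u; push_cast; ring
    simp_rw [harg]
    rw [integral_exp_mul_complex hc]
    have h1 : ((n:ℂ) * (2*(π:ℝ)) * Complex.I) * ((1:ℝ):ℂ) = (n:ℂ) * (2*(π:ℝ)*Complex.I) := by
      push_cast; ring
    have h0 : ((n:ℂ) * (2*(π:ℝ)) * Complex.I) * ((0:ℝ):ℂ) = 0 := by push_cast; ring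
    rw [h1, h0, Complex.exp_int_mul_two_pi_mul_I, Complex.exp_zero]
    simp [hn]


lemma oneDim (s : ℝ) (hs : 0 ≤ s) (m : ℤ) :
    ∫ u in Set.Icc (0:ℝ) 1,
      Complex.exp (2 * s * Real.cos (2*(π:ℝ)*u)) * Complex.exp ((m:ℂ) * (2*(π:ℝ)*u) * Complex.I)
      = ((cc s m.natAbs : ℝ) : ℂ) := by
  have hpt : ∀ u : ℝ,
      Complex.exp (2 * s * Real.cos (2*(π:ℝ)*u)) * Complex.exp ((m:ℂ) * (2*(π:ℝ)*u) * Complex.I)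
      = ∑' jk : ℕ × ℕ, ((aa s jk.1 * aa s jk.2 : ℝ) : ℂ) *
          Complex.exp ((((jk.1 : ℤ) - (jk.2 : ℤ) + m : ℤ) : ℂ) * (2*(π:ℝ)*u) * Complex.I) :=
    fun u => (hasSum_exp_cos s m u).tsum_eq.symm
  simp_rw [hpt]
  rw [MeasureTheory.integral_tsum]
  · -- evaluate each integral
    have hterm : ∀ jk : ℕ × ℕ,
        (∫ u in Set.Icc (0:ℝ) 1, ((aa s jk.1 * aa s jk.2 : ℝ) : ℂ) *
          Complex.exp ((((jk.1 : ℤ) - (jk.2 : ℤ) + m : ℤ) : ℂ) * (2*(π:ℝ)*u) * Complex.I))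
        = ((aa s jk.1 * aa s jk.2 : ℝ) : ℂ) *
            (if ((jk.1 : ℤ) - (jk.2 : ℤ) + m) = 0 then 1 else 0) := by
      intro jk
      rw [MeasureTheory.integral_const_mul, integral_cexp_int]
    simp_rw [hterm]
    -- now reindex
    rcases le_or_gt 0 m with hm | hm
    · have he : Function.Injective (fun j : ℕ => (j, j + m.natAbs)) := by
        intro a b h
        simpa using congrArg Prod.fst h
      rw [← Function.Injective.tsum_eq he ?_]
      · have : ∀ j : ℕ, (((j:ℤ) - (j + m.natAbs : ℕ) + m) = 0) := by intro j; omega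
        simp only [this, if_pos, mul_one]
        rw [← Complex.ofReal_tsum]
        rfl
      · intro x hx
        rcases x with ⟨j, k⟩
        have hcond : ((j:ℤ) - (k : ℤ) + m = 0) := by
          by_contra h
          exact hx (by simp [h])
        have hk : j + m.natAbs = k := by omega
        exact ⟨j, by beta_reduce; rw [hk]⟩
    · have he : Function.Injective (fun k : ℕ => (k + m.natAbs, k)) := by
        intro a b h
        simpa using congrArg Prod.snd h
      rw [← Function.Injective.tsum_eq he ?_]
      · have : ∀ k : ℕ, ((((k + m.natAbs : ℕ)):ℤ) - (k:ℤ) + m) = 0 := by intro k; omega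
        simp only [this, if_pos, mul_one]
        rw [← Complex.ofReal_tsum]
        norm_cast
        unfold cc
        apply tsum_congr
        intro k
        rw [mul_comm, add_comm k m.natAbs]
      · intro x hx
        rcases x with ⟨j, k⟩
        have hcond : ((j:ℤ) - (k : ℤ) + m = 0) := by
          by_contra h
          exact hx (by simp [h])
        have hk : k + m.natAbs = j := by omega
        exact ⟨k, by beta_reduce; rw [hk]⟩
  · -- measurability
    intro jk
    apply Continuous.aestronglyMeasurable
    apply Continuous.mul continuous_const
    apply Complex.continuous_exp.comp
    fun_prop
  · -- lintegral bound
    have hterm : ∀ (jk : ℕ × ℕ) (u : ℝ),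
        (‖((aa s jk.1 * aa s jk.2 : ℝ) : ℂ) *
          Complex.exp ((((jk.1 : ℤ) - (jk.2 : ℤ) + m : ℤ) : ℂ) * (2*(π:ℝ)*u) * Complex.I)‖ₑ : ENNReal)
        = ENNReal.ofReal (aa s jk.1 * aa s jk.2) := by
      intro jk u
      have h1 : ‖((aa s jk.1 * aa s jk.2 : ℝ) : ℂ) *
          Complex.exp ((((jk.1 : ℤ) - (jk.2 : ℤ) + m : ℤ) : ℂ) * (2*(π:ℝ)*u) * Complex.I)‖
          = aa s jk.1 * aa s jk.2 := by
        rw [norm_mul, Complex.norm_real, Real.norm_eq_abs,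
          _root_.abs_of_nonneg (mul_nonneg (aa_nonneg hs _) (aa_nonneg hs _))]
        rw [Complex.norm_exp]
        have : ((((jk.1 : ℤ) - (jk.2 : ℤ) + m : ℤ) : ℂ) * (2*(π:ℝ)*u) * Complex.I).re = 0 := by
          simp
        rw [this, Real.exp_zero, mul_one]
      rw [← ofReal_norm, h1]
    simp_rw [hterm]
    have hvol : (volume (Set.Icc (0:ℝ) 1)) = 1 := by
      rw [Real.volume_Icc]; norm_num
    have hli : ∀ jk : ℕ × ℕ,
        (∫⁻ _ in Set.Icc (0:ℝ) 1, ENNReal.ofReal (aa s jk.1 * aa s jk.2)) =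
        ENNReal.ofReal (aa s jk.1 * aa s jk.2) := by
      intro jk
      rw [MeasureTheory.setLIntegral_const, hvol, mul_one]
    simp_rw [hli]
    have hsummable : Summable (fun jk : ℕ × ℕ => aa s jk.1 * aa s jk.2) :=
      (Real.summable_pow_div_factorial s).mul_of_nonneg (Real.summable_pow_div_factorial s)
        (fun n => aa_nonneg hs n) (fun n => aa_nonneg hs n)
    rw [← ENNReal.ofReal_tsum_of_nonneg (fun jk => mul_nonneg (aa_nonneg hs _) (aa_nonneg hs _)) hsummable]
    exact ENNReal.ofReal_ne_top




-- the one-dimensional complex integrand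
def HH (s : ℝ) (m : ℤ) (u : ℝ) : ℂ :=
  ((Real.exp (2*s*(Real.cos (2*(π:ℝ)*u) - 1)) : ℝ) : ℂ) *
    Complex.exp ((m:ℂ) * (2*(π:ℝ)*u) * Complex.I)

lemma continuous_HH (s : ℝ) (m : ℤ) : Continuous (HH s m) := by
  unfold HH
  apply Continuous.mul
  · apply Continuous.comp Complex.continuous_ofReal
    apply Real.continuous_exp.comp
    fun_prop
  · apply Complex.continuous_exp.comp
    fun_prop

lemma prod_HH (d : ℕ) (s : ℝ) (γ t : ℝ) (hst : γ * t = s) (x : Fin d → ℤ) (ξ : Fin d → ℝ) :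
    ∏ j, HH s (x j) (ξ j) =
      ((Real.exp (γ * t * alphaFn d ξ) : ℝ) : ℂ) *
        Complex.exp (((2 * Real.pi * ∑ j, ξ j * (x j : ℝ) : ℝ) : ℂ) * Complex.I) := by
  unfold HH
  rw [Finset.prod_mul_distrib]
  congr 1
  · rw [← Complex.ofReal_prod, ← Real.exp_sum]
    norm_cast
    congr 1
    unfold alphaFn
    rw [← hst, Finset.mul_sum]
    apply Finset.sum_congr rfl
    intro j _
    ring
  · rw [← Complex.exp_sum]
    congr 1
    push_cast
    rw [Finset.mul_sum, ← Finset.sum_mul]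
    congr 1
    apply Finset.sum_congr rfl
    intro j _
    ring


lemma kernel_eq_aux (d : ℕ) (γ t s : ℝ) (hst : γ * t = s) (x : Fin d → ℤ) :
    heatKernel d γ t x = (∏ j, ∫ u in Set.Icc (0:ℝ) 1, HH s (x j) u).re := by
  have hcontP : Continuous (fun ξ : Fin d → ℝ => ∏ j, HH s (x j) (ξ j)) := by
    apply continuous_finset_prod
    intro j _
    exact (continuous_HH s (x j)).comp (continuous_apply j)
  have step1 : heatKernel d γ t x
      = ∫ ξ in Set.Icc (0 : Fin d → ℝ) 1, (∏ j, HH s (x j) (ξ j)).re := by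
    unfold heatKernel
    congr 1
    funext ξ
    rw [prod_HH d s γ t hst x ξ, Complex.re_ofReal_mul, Complex.exp_ofReal_mul_I_re]
  have step2 : ∫ ξ in Set.Icc (0 : Fin d → ℝ) 1, (∏ j, HH s (x j) (ξ j)).re
      = (∫ ξ in Set.Icc (0 : Fin d → ℝ) 1, ∏ j, HH s (x j) (ξ j)).re := by
    have hInt : IntegrableOn (fun ξ : Fin d → ℝ => ∏ j, HH s (x j) (ξ j))
        (Set.Icc (0 : Fin d → ℝ) 1) volume :=
      hcontP.continuousOn.integrableOn_compact isCompact_Icc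
    exact integral_re hInt
  have step3 : ∫ ξ in Set.Icc (0 : Fin d → ℝ) 1, ∏ j, HH s (x j) (ξ j)
      = ∏ j, ∫ u in Set.Icc (0:ℝ) 1, HH s (x j) u := by
    rw [← MeasureTheory.integral_indicator measurableSet_Icc]
    have hind : Set.indicator (Set.Icc (0 : Fin d → ℝ) 1)
          (fun ξ : Fin d → ℝ => ∏ j, HH s (x j) (ξ j))
        = fun ξ : Fin d → ℝ => ∏ j, Set.indicator (Set.Icc (0:ℝ) 1) (HH s (x j)) (ξ j) := by
      funext ξ
      by_cases hξ : ξ ∈ Set.Icc (0 : Fin d → ℝ) 1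
      · rw [Set.indicator_of_mem hξ]
        have hj : ∀ j, ξ j ∈ Set.Icc (0:ℝ) 1 := by
          intro j
          rcases hξ with ⟨h0, h1⟩
          exact ⟨h0 j, h1 j⟩
        exact (Finset.prod_congr rfl fun j _ => (Set.indicator_of_mem (hj j) _).symm)
      · rw [Set.indicator_of_notMem hξ]
        have : ∃ j, ξ j ∉ Set.Icc (0:ℝ) 1 := by
          by_contra h
          push_neg at h
          exact hξ ⟨fun j => (h j).1, fun j => (h j).2⟩
        obtain ⟨j, hj⟩ := this
        exact (Finset.prod_eq_zero (Finset.mem_univ j) (Set.indicator_of_notMem hj _)).symm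
    rw [hind, MeasureTheory.integral_fintype_prod_volume_eq_prod
      (f := fun j => Set.indicator (Set.Icc (0:ℝ) 1) (HH s (x j)))]
    exact Finset.prod_congr rfl fun j _ =>
      MeasureTheory.integral_indicator measurableSet_Icc
  rw [step1, step2, step3]


lemma cc_anti {s : ℝ} (hs : 0 ≤ s) : Antitone (cc s) :=
  antitone_nat_of_succ_le (fun n => cc_succ_le hs n)

def qq (s : ℝ) (m : ℤ) : ℝ := Real.exp (-(2*s)) * cc s m.natAbs

lemma qq_nonneg {s : ℝ} (hs : 0 ≤ s) (m : ℤ) : 0 ≤ qq s m :=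
  mul_nonneg (Real.exp_nonneg _) (cc_nonneg hs _)

lemma qq_anti {s : ℝ} (hs : 0 ≤ s) {a b : ℤ} (h : a.natAbs ≤ b.natAbs) : qq s b ≤ qq s a :=
  mul_le_mul_of_nonneg_left (cc_anti hs h) (Real.exp_nonneg _)

lemma intHH (s : ℝ) (hs : 0 ≤ s) (m : ℤ) :
    ∫ u in Set.Icc (0:ℝ) 1, HH s m u = ((qq s m : ℝ) : ℂ) := by
  have hfun : HH s m = fun u => ((Real.exp (-(2*s)) : ℝ) : ℂ) *
      (Complex.exp (2 * s * Real.cos (2*(π:ℝ)*u)) *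
        Complex.exp ((m:ℂ) * (2*(π:ℝ)*u) * Complex.I)) := by
    funext u
    unfold HH
    have h1 : ((Real.exp (2*s*(Real.cos (2*(π:ℝ)*u) - 1)) : ℝ) : ℂ)
        = ((Real.exp (-(2*s)) : ℝ) : ℂ) * Complex.exp (2 * s * Real.cos (2*(π:ℝ)*u)) := by
      rw [show 2*s*(Real.cos (2*(π:ℝ)*u)-1) = (-(2*s)) + 2*s*Real.cos (2*(π:ℝ)*u) by ring,
        Real.exp_add, Complex.ofReal_mul]
      congr 1
      norm_cast
    rw [h1]
    ring
  rw [hfun, MeasureTheory.integral_const_mul, oneDim s hs m, ← Complex.ofReal_mul]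
  rfl

lemma kernel_eq (d : ℕ) (γ t s : ℝ) (hst : γ * t = s) (hs : 0 ≤ s) (x : Fin d → ℤ) :
    heatKernel d γ t x = ∏ j, qq s (x j) := by
  rw [kernel_eq_aux d γ t s hst x]
  have : ∀ j : Fin d, (∫ u in Set.Icc (0:ℝ) 1, HH s (x j) u) = ((qq s (x j) : ℝ) : ℂ) :=
    fun j => intHH s hs (x j)
  simp_rw [this]
  rw [← Complex.ofReal_prod, Complex.ofReal_re]

lemma summable_qq {s : ℝ} (hs : 0 ≤ s) : Summable (fun m : ℤ => qq s m) := by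
  have hb : Summable (fun m : ℤ => aa s m.natAbs) := by
    apply Summable.of_nat_of_neg
    · apply (summable_aa s).congr
      intro n
      simp
    · apply (summable_aa s).congr
      intro n
      simp
  refine Summable.of_nonneg_of_le (fun m => qq_nonneg hs m) (fun m => ?_)
    (hb.mul_left (Real.exp (-(2*s)) * (Ea s * Ea s)))
  show qq s m ≤ (Real.exp (-(2*s)) * (Ea s * Ea s)) * aa s m.natAbs
  unfold qq
  rw [mul_assoc]
  exact mul_le_mul_of_nonneg_left (cc_le hs m.natAbs) (Real.exp_nonneg _)

lemma summable_prod_qq (d : ℕ) {s : ℝ} (hs : 0 ≤ s) :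
    Summable (fun y : Fin d → ℤ => ∏ j, qq s (y j)) := by
  classical
  have hnn : ∀ y : Fin d → ℤ, 0 ≤ ∏ j, qq s (y j) :=
    fun y => Finset.prod_nonneg fun j _ => qq_nonneg hs _
  apply summable_of_sum_le (c := ∏ _j : Fin d, (∑' m : ℤ, qq s m)) hnn
  intro u
  set B : Finset ℤ := u.biUnion (fun y => Finset.image y Finset.univ) with hB
  have hsub : u ⊆ Fintype.piFinset (fun _ : Fin d => B) := by
    intro y hy
    rw [Fintype.mem_piFinset]
    intro j
    exact Finset.mem_biUnion.2 ⟨y, hy, Finset.mem_image.2 ⟨j, Finset.mem_univ j, rfl⟩⟩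
  calc ∑ y ∈ u, ∏ j, qq s (y j)
      ≤ ∑ y ∈ Fintype.piFinset (fun _ : Fin d => B), ∏ j, qq s (y j) :=
        Finset.sum_le_sum_of_subset_of_nonneg hsub (fun y _ _ => hnn y)
    _ = ∏ _j : Fin d, ∑ m ∈ B, qq s m := by
        rw [Finset.prod_univ_sum]
    _ ≤ ∏ _j : Fin d, (∑' m : ℤ, qq s m) := by
        apply Finset.prod_le_prod
        · intro j _
          exact Finset.sum_nonneg fun m _ => qq_nonneg hs m
        · intro j _
          exact Summable.sum_le_tsum B (fun m _ => qq_nonneg hs m) (summable_qq hs)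

end ClaimA1

/-- Monotonicity and symmetry preservation for the discrete heat semigroup
(proof of Claim A.1): if a bounded `f : ℤ^d → ℝ` satisfies `f(x) ≥ f(x+eᵢ)` whenever
`⟨x,eᵢ⟩ ≥ 0` and is symmetric under negation of the `i`-th coordinate, then the heat
evolution `f(t,x) = ∑_z p(t,x−z) f(z)` satisfies the same two properties for all `t ≥ 0`. -/
theorem heat_evolution_preserves_symmetry_and_monotonicity
    (d : ℕ) (hd : 1 ≤ d) (γ : ℝ) (hγ : 0 < γ) (i : Fin d)
    (f : (Fin d → ℤ) → ℝ) (hbdd : ∃ C : ℝ, ∀ x, |f x| ≤ C)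
    (hmono : ∀ x : Fin d → ℤ, 0 ≤ x i → f (x + Pi.single i 1) ≤ f x)
    (hsym : ∀ x : Fin d → ℤ, f (Function.update x i (-(x i))) = f x)
    (F : ℝ → (Fin d → ℤ) → ℝ)
    (hF : ∀ t x, F t x = ∑' z : Fin d → ℤ, heatKernel d γ t (x - z) * f z) :
    ∀ t : ℝ, 0 ≤ t →
      (∀ x : Fin d → ℤ, F t (Function.update x i (-(x i))) = F t x) ∧
      (∀ x : Fin d → ℤ, 0 < x i → F t (x + Pi.single i 1) ≤ F t x) := by
  classical
  obtain ⟨C, hC⟩ := hbdd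
  intro t ht
  set s : ℝ := γ * t with hsdef
  have hs : 0 ≤ s := mul_nonneg hγ.le ht
  have hker : ∀ y : Fin d → ℤ, heatKernel d γ t y = ∏ j, ClaimA1.qq s (y j) :=
    fun y => ClaimA1.kernel_eq d γ t s rfl hs y
  have hker_nonneg : ∀ y, 0 ≤ heatKernel d γ t y := by
    intro y
    rw [hker]
    exact Finset.prod_nonneg fun j _ => ClaimA1.qq_nonneg hs _
  have hker_sum : Summable (fun y : Fin d → ℤ => heatKernel d γ t y) :=
    (ClaimA1.summable_prod_qq d hs).congr (fun y => (hker y).symm)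
  have hker_sum_x : ∀ x : Fin d → ℤ,
      Summable (fun z : Fin d → ℤ => heatKernel d γ t (x - z)) := by
    intro x
    exact hker_sum.comp_injective (fun a b h => sub_right_injective h)
  have hsummable : ∀ (g : (Fin d → ℤ) → ℝ), (∀ z, |g z| ≤ C) → ∀ x : Fin d → ℤ,
      Summable (fun z => heatKernel d γ t (x - z) * g z) := by
    intro g hg x
    apply Summable.of_norm_bounded (g := fun z => C * heatKernel d γ t (x - z))
      ((hker_sum_x x).mul_left C)
    intro z
    rw [norm_mul, Real.norm_eq_abs, Real.norm_eq_abs,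
      _root_.abs_of_nonneg (hker_nonneg _)]
    calc heatKernel d γ t (x - z) * |g z| ≤ heatKernel d γ t (x - z) * C :=
          mul_le_mul_of_nonneg_left (hg z) (hker_nonneg _)
      _ = C * heatKernel d γ t (x - z) := by ring
  -- evenness of the kernel in coordinate i
  have hpev : ∀ w : Fin d → ℤ,
      heatKernel d γ t (Function.update w i (-(w i))) = heatKernel d γ t w := by
    intro w
    rw [hker, hker]
    apply Finset.prod_congr rfl
    intro j _
    by_cases hj : j = i
    · subst hj
      rw [Function.update_self]
      unfold ClaimA1.qq
      rw [Int.natAbs_neg]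
    · rw [Function.update_of_ne hj]
  constructor
  · -- symmetry
    intro x
    rw [hF t _, hF t x]
    have hRinv : Function.Involutive
        (fun z : Fin d → ℤ => Function.update z i (-(z i))) := by
      intro z
      funext j
      by_cases hj : j = i
      · subst hj; simp
      · simp [Function.update_of_ne hj]
    set R := hRinv.toPerm
    have h1 : ∑' z, heatKernel d γ t (Function.update x i (-(x i)) - z) * f z
        = ∑' z, heatKernel d γ t (Function.update x i (-(x i)) - R z) * f (R z) :=
      (Equiv.tsum_eq R (fun z => heatKernel d γ t (Function.update x i (-(x i)) - z) * f z)).symm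
    rw [h1]
    apply tsum_congr
    intro z
    have hRz : R z = Function.update z i (-(z i)) := rfl
    have harg : Function.update x i (-(x i)) - R z
        = Function.update (x - z) i (-((x - z) i)) := by
      funext j
      by_cases hj : j = i
      · subst hj; simp [hRz]; ring
      · simp [hRz, Function.update_of_ne hj]
    rw [harg, hpev, hRz, hsym z]
  · -- monotonicity
    intro x hx
    rw [hF t _, hF t x, ← sub_nonneg]
    have hfC' : ∀ z : Fin d → ℤ, |f (z + Pi.single i 1)| ≤ C := fun z => hC _
    have hsum1 : Summable (fun z => heatKernel d γ t (x - z) * f z) := hsummable f hC x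
    have hsum2 : Summable (fun z => heatKernel d γ t (x - z) * f (z + Pi.single i 1)) :=
      hsummable (fun z => f (z + Pi.single i 1)) hfC' x
    -- rewrite the shifted evolution
    have hshift : ∑' z, heatKernel d γ t (x + Pi.single i 1 - z) * f z
        = ∑' z, heatKernel d γ t (x - z) * f (z + Pi.single i 1) := by
      have := (Equiv.tsum_eq (Equiv.addRight (Pi.single i 1 : Fin d → ℤ))
        (fun z => heatKernel d γ t (x + Pi.single i 1 - z) * f z)).symm
      rw [this]
      apply tsum_congr
      intro z
      have : x + Pi.single i 1 - (z + Pi.single i 1) = x - z := by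
        funext j; simp
      simp only [Equiv.coe_addRight, this]
    rw [hshift, ← Summable.tsum_sub hsum1 hsum2]
    have hsub : ∀ z, heatKernel d γ t (x - z) * f z
        - heatKernel d γ t (x - z) * f (z + Pi.single i 1)
        = heatKernel d γ t (x - z) * (f z - f (z + Pi.single i 1)) := by
      intro z; ring
    simp_rw [hsub]
    set g : (Fin d → ℤ) → ℝ := fun z => f z - f (z + Pi.single i 1) with hgdef
    set h : (Fin d → ℤ) → ℝ := fun z => heatKernel d γ t (x - z) * g z with hhdef
    have hsumh : Summable h := by
      apply Summable.of_norm_bounded (g := fun z => (2*|C|) * heatKernel d γ t (x - z))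
        ((hker_sum_x x).mul_left _)
      intro z
      rw [hhdef]
      simp only [norm_mul, Real.norm_eq_abs]
      rw [_root_.abs_of_nonneg (hker_nonneg _)]
      have : |g z| ≤ 2*|C| := by
        rw [hgdef]
        calc |f z - f (z + Pi.single i 1)| ≤ |f z| + |f (z + Pi.single i 1)| := abs_sub _ _
          _ ≤ C + C := add_le_add (hC z) (hC _)
          _ ≤ |C| + |C| := add_le_add (le_abs_self C) (le_abs_self C)
          _ = 2*|C| := by ring
      calc heatKernel d γ t (x - z) * |g z| ≤ heatKernel d γ t (x - z) * (2*|C|) :=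
            mul_le_mul_of_nonneg_left this (hker_nonneg _)
        _ = (2*|C|) * heatKernel d γ t (x - z) := by ring
    have hσinv : Function.Involutive
        (fun z : Fin d → ℤ => Function.update z i (-(z i) - 1)) := by
      intro z
      funext j
      by_cases hj : j = i
      · subst hj; simp
      · simp [Function.update_of_ne hj]
    set σ := hσinv.toPerm with hσdef
    have hσapp : ∀ z : Fin d → ℤ, σ z = Function.update z i (-(z i) - 1) := fun z => rfl
    -- g is antisymmetric under σ
    have hganti : ∀ z, g (σ z) = - g z := by
      intro z
      have e1 : σ z = Function.update (z + Pi.single i 1 : Fin d → ℤ) i (-((z + Pi.single i 1 : Fin d → ℤ) i)) := by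
        funext j
        by_cases hj : j = i
        · subst hj; simp [hσapp]; ring
        · simp [hσapp, Function.update_of_ne hj, Pi.single_eq_of_ne hj]
      have e2 : σ z + Pi.single i 1 = Function.update z i (-(z i)) := by
        funext j
        by_cases hj : j = i
        · subst hj; simp [hσapp]
        · simp [hσapp, Function.update_of_ne hj, Pi.single_eq_of_ne hj]
      rw [hgdef]
      simp only
      rw [e2, e1, hsym (z + Pi.single i 1), hsym z]
      ring
    -- pointwise nonnegativity of the symmetrized term, first for z i ≥ 0
    have hknn0 : ∀ z : Fin d → ℤ, 0 ≤ z i → 0 ≤ h z + h (σ z) := by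
      intro z hz
      have hgz : 0 ≤ g z := sub_nonneg.2 (hmono z hz)
      have hcomb : h z + h (σ z)
          = (heatKernel d γ t (x - z) - heatKernel d γ t (x - σ z)) * g z := by
        rw [hhdef]
        simp only
        rw [hganti z]
        ring
      rw [hcomb]
      apply mul_nonneg _ hgz
      rw [sub_nonneg, hker, hker]
      apply Finset.prod_le_prod
      · intro j _
        exact ClaimA1.qq_nonneg hs _
      · intro j _
        by_cases hj : j = i
        · subst hj
          have hv1 : (x - σ z) j = x j + z j + 1 := by
            simp [hσapp]
            ring
          have hv2 : (x - z) j = x j - z j := by simp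
          rw [hv1, hv2]
          apply ClaimA1.qq_anti hs
          omega
        · have : (x - σ z) j = (x - z) j := by
            simp [hσapp, Function.update_of_ne hj]
          rw [this]
    have hknn : ∀ z : Fin d → ℤ, 0 ≤ h z + h (σ z) := by
      intro z
      by_cases hz : 0 ≤ z i
      · exact hknn0 z hz
      · have hzi : 0 ≤ (σ z) i := by
          rw [hσapp]
          simp
          omega
        have := hknn0 (σ z) hzi
        have hσσ : σ (σ z) = z := hσinv z
        rw [hσσ] at this
        linarith
    -- conclude
    have hsumhσ : Summable (fun z => h (σ z)) := hsumh.comp_injective σ.injective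
    have htsσ : ∑' z, h (σ z) = ∑' z, h z := Equiv.tsum_eq σ h
    have hts2 : ∑' z, (h z + h (σ z)) = (∑' z, h z) + ∑' z, h (σ z) :=
      Summable.tsum_add hsumh hsumhσ
    have hnn : 0 ≤ ∑' z, (h z + h (σ z)) := tsum_nonneg hknn
    rw [hts2, htsσ] at hnn
    have : 0 ≤ ∑' z, h z := by linarith
    exact this

end
end

section
/- There exists a constant c > 0, depending only on the dimension d, such that for all γ > 0, all t > 0, all z ∈ ℤ^d and every coordinate direction e ∈ 𝒩 := {e_1,…,e_d,−e_1,…,−e_d}, one has |p(t,z) − p(t,z+e)| ≤ c (γt)^{−(d+1)/2}. -/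
open scoped Real BigOperators

noncomputable section

namespace HKGrad
open MeasureTheory Set Real



lemma reflect_int (f : ℝ → ℝ) :
    (∫ s in Icc (0:ℝ) 1, f (1 - s)) = ∫ s in Icc (0:ℝ) 1, f s := by
  rw [MeasureTheory.integral_Icc_eq_integral_Ioc,
    MeasureTheory.integral_Icc_eq_integral_Ioc,
    ← intervalIntegral.integral_of_le (zero_le_one),
    ← intervalIntegral.integral_of_le (zero_le_one),
    intervalIntegral.integral_comp_sub_left f 1]
  norm_num

lemma sin_lower {s : ℝ} (h0 : 0 ≤ s) (h1 : s ≤ 1/2) : 2 * s ≤ Real.sin (π * s) := by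
  have := Real.mul_le_sin (x := π * s) (by positivity)
    (by nlinarith [Real.pi_pos])
  have hπ := Real.pi_pos
  calc 2 * s = 2 / π * (π * s) := by field_simp
    _ ≤ Real.sin (π * s) := this

lemma exp_core_bound {u s : ℝ} (hu : 0 < u) (h0 : 0 ≤ s) (h1 : s ≤ 1) :
    Real.exp (-(4*u) * Real.sin (π*s)^2) ≤
      Real.exp (-(16*u) * s^2) + Real.exp (-(16*u) * (1-s)^2) := by
  rcases le_or_gt s (1/2) with hs | hs
  · have h2 := sin_lower h0 hs
    have hsq : 4 * s^2 ≤ Real.sin (π*s)^2 := by nlinarith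
    have : Real.exp (-(4*u) * Real.sin (π*s)^2) ≤ Real.exp (-(16*u) * s^2) := by
      apply Real.exp_le_exp.2; nlinarith
    linarith [(Real.exp_pos (-(16*u) * (1-s)^2)).le]
  · have hrefl : Real.sin (π*s) = Real.sin (π*(1-s)) := by
      rw [show π * (1-s) = π - π * s by ring, Real.sin_pi_sub]
    have h2 := sin_lower (s := 1 - s) (by linarith) (by linarith)
    have hsq : 4 * (1-s)^2 ≤ Real.sin (π*s)^2 := by rw [hrefl]; nlinarith
    have : Real.exp (-(4*u) * Real.sin (π*s)^2) ≤ Real.exp (-(16*u) * (1-s)^2) := by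
      apply Real.exp_le_exp.2; nlinarith
    linarith [(Real.exp_pos (-(16*u) * s^2)).le]

lemma lemI {u : ℝ} (hu : 0 < u) :
    (∫ s in Icc (0:ℝ) 1, Real.exp (-(4*u) * Real.sin (π*s)^2)) ≤ (Real.sqrt u)⁻¹ := by
  have hcont : Continuous fun s : ℝ => Real.exp (-(4*u) * Real.sin (π*s)^2) := by fun_prop
  have hcontg : Continuous fun s : ℝ => Real.exp (-(16*u) * s^2) := by fun_prop
  have hcontg' : Continuous fun s : ℝ => Real.exp (-(16*u) * (1-s)^2) := by fun_prop
  have hintg : IntegrableOn (fun s : ℝ => Real.exp (-(16*u) * s^2)) (Icc 0 1) :=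
    hcontg.continuousOn.integrableOn_compact isCompact_Icc
  have hintg' : IntegrableOn (fun s : ℝ => Real.exp (-(16*u) * (1-s)^2)) (Icc 0 1) :=
    hcontg'.continuousOn.integrableOn_compact isCompact_Icc
  have h16 : (0:ℝ) < 16 * u := by linarith
  have step1 : (∫ s in Icc (0:ℝ) 1, Real.exp (-(4*u) * Real.sin (π*s)^2)) ≤
      ∫ s in Icc (0:ℝ) 1, (Real.exp (-(16*u) * s^2) + Real.exp (-(16*u) * (1-s)^2)) := by
    apply setIntegral_mono_on (hcont.continuousOn.integrableOn_compact isCompact_Icc)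
      (hintg.add hintg') measurableSet_Icc
    intro s hs
    exact exp_core_bound hu hs.1 hs.2
  have step2 : (∫ s in Icc (0:ℝ) 1, (Real.exp (-(16*u) * s^2) + Real.exp (-(16*u) * (1-s)^2)))
      = (∫ s in Icc (0:ℝ) 1, Real.exp (-(16*u) * s^2)) * 2 := by
    rw [MeasureTheory.integral_add hintg hintg']
    rw [reflect_int (fun s => Real.exp (-(16*u) * s^2))]
    ring
  have step3 : (∫ s in Icc (0:ℝ) 1, Real.exp (-(16*u) * s^2)) ≤
      ∫ s : ℝ, Real.exp (-(16*u) * s^2) := by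
    apply setIntegral_le_integral (integrable_exp_neg_mul_sq h16)
    filter_upwards with s using (Real.exp_pos _).le
  have step4 : (∫ s : ℝ, Real.exp (-(16*u) * s^2)) = Real.sqrt (π / (16*u)) :=
    integral_gaussian _
  have step5 : Real.sqrt (π / (16*u)) ≤ (2 * Real.sqrt u)⁻¹ := by
    have h1 : π / (16*u) ≤ 1 / (4*u) := by
      rw [div_le_div_iff₀ (by linarith) (by linarith)]
      nlinarith [Real.pi_le_four]
    have h2 : ((2 * Real.sqrt u)⁻¹)^2 = 1 / (4*u) := by
      rw [← one_div, div_pow, mul_pow, Real.sq_sqrt hu.le]; norm_num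
    calc Real.sqrt (π / (16*u)) ≤ Real.sqrt (1 / (4*u)) := Real.sqrt_le_sqrt h1
      _ = Real.sqrt (((2 * Real.sqrt u)⁻¹)^2) := by rw [h2]
      _ = (2 * Real.sqrt u)⁻¹ := Real.sqrt_sq (by positivity)
  have hsqrt : (0:ℝ) < Real.sqrt u := Real.sqrt_pos.2 hu
  calc (∫ s in Icc (0:ℝ) 1, Real.exp (-(4*u) * Real.sin (π*s)^2)) ≤
      (∫ s in Icc (0:ℝ) 1, Real.exp (-(16*u) * s^2)) * 2 := step1.trans_eq step2
    _ ≤ Real.sqrt (π / (16*u)) * 2 := by nlinarith [step3.trans_eq step4]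
    _ ≤ (2 * Real.sqrt u)⁻¹ * 2 := by nlinarith [step5]
    _ = (Real.sqrt u)⁻¹ := by rw [mul_inv]; field_simp

lemma lemI_nonneg {u : ℝ} :
    0 ≤ ∫ s in Icc (0:ℝ) 1, Real.exp (-(4*u) * Real.sin (π*s)^2) :=
  setIntegral_nonneg measurableSet_Icc fun s _ => (Real.exp_pos _).le

-- FTC computation
lemma ftc_bound {b : ℝ} (hb : 0 < b) :
    (∫ s in Icc (0:ℝ) 1, s * Real.exp (-b * s^2)) ≤ (2*b)⁻¹ := by
  have hderiv : ∀ s : ℝ, HasDerivAt (fun r : ℝ => -(2*b)⁻¹ * Real.exp (-b * r^2))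
      (s * Real.exp (-b * s^2)) s := by
    intro s
    have h1 : HasDerivAt (fun r : ℝ => -b * r^2) (-b * (2*s)) s := by
      simpa using ((hasDerivAt_pow 2 s).const_mul (-b))
    have h2 := (h1.exp).const_mul (-(2*b)⁻¹)
    have hX : (2*b)⁻¹ * (2*b) = 1 := inv_mul_cancel₀ (by positivity)
    have e : s * Real.exp (-b * s^2) = -(2*b)⁻¹ * (Real.exp (-b * s^2) * (-b * (2*s))) := by
      linear_combination (-(s * Real.exp (-b * s^2))) * hX
    rw [e]
    exact h2
  have hcont : Continuous fun s : ℝ => s * Real.exp (-b * s^2) := by fun_prop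
  have heval : (∫ s in (0:ℝ)..1, s * Real.exp (-b * s^2)) =
      -(2*b)⁻¹ * Real.exp (-b * 1^2) - -(2*b)⁻¹ * Real.exp (-b * 0^2) := by
    exact intervalIntegral.integral_eq_sub_of_hasDerivAt (fun s _ => hderiv s)
      (hcont.intervalIntegrable 0 1)
  rw [MeasureTheory.integral_Icc_eq_integral_Ioc, ← intervalIntegral.integral_of_le zero_le_one,
    heval]
  have h1 : 0 < Real.exp (-b * 1^2) := Real.exp_pos _
  have h2 : Real.exp (-b * 0^2) = 1 := by norm_num
  rw [h2]
  have h3 : (0:ℝ) < (2*b)⁻¹ := by positivity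
  nlinarith [mul_pos h3 h1]

lemma sin_upper {s : ℝ} (h0 : 0 ≤ s) (h1 : s ≤ 1) : |Real.sin (π * s)| ≤ π * min s (1-s) := by
  rcases le_total s (1/2) with hs | hs
  · rw [min_eq_left (by linarith)]
    calc |Real.sin (π*s)| ≤ |π*s| := Real.abs_sin_le_abs
      _ = π*s := abs_of_nonneg (mul_nonneg Real.pi_pos.le h0)
  · rw [min_eq_right (by linarith)]
    have hrefl : Real.sin (π*s) = Real.sin (π*(1-s)) := by
      rw [show π * (1-s) = π - π * s by ring, Real.sin_pi_sub]
    rw [hrefl]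
    calc |Real.sin (π*(1-s))| ≤ |π*(1-s)| := Real.abs_sin_le_abs
      _ = π*(1-s) := abs_of_nonneg (mul_nonneg Real.pi_pos.le (by linarith))

lemma lemJ {u : ℝ} (hu : 0 < u) :
    (∫ s in Icc (0:ℝ) 1, Real.exp (-(4*u) * Real.sin (π*s)^2) * (2 * |Real.sin (π*s)|))
      ≤ u⁻¹ := by
  have hπ := Real.pi_pos
  have h16 : (0:ℝ) < 16 * u := by linarith
  have hcont : Continuous fun s : ℝ =>
      Real.exp (-(4*u) * Real.sin (π*s)^2) * (2 * |Real.sin (π*s)|) := by fun_prop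
  have hcont1 : Continuous fun s : ℝ => (2*π) * (s * Real.exp (-(16*u) * s^2)) := by fun_prop
  have hcont2 : Continuous fun s : ℝ => (2*π) * ((1-s) * Real.exp (-(16*u) * (1-s)^2)) := by
    fun_prop
  have hint1 : IntegrableOn (fun s : ℝ => (2*π) * (s * Real.exp (-(16*u) * s^2))) (Icc 0 1) :=
    hcont1.continuousOn.integrableOn_compact isCompact_Icc
  have hint2 : IntegrableOn (fun s : ℝ => (2*π) * ((1-s) * Real.exp (-(16*u) * (1-s)^2)))
      (Icc 0 1) := hcont2.continuousOn.integrableOn_compact isCompact_Icc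
  have key : ∀ s ∈ Icc (0:ℝ) 1,
      Real.exp (-(4*u) * Real.sin (π*s)^2) * (2 * |Real.sin (π*s)|) ≤
      (2*π) * (s * Real.exp (-(16*u) * s^2)) + (2*π) * ((1-s) * Real.exp (-(16*u) * (1-s)^2)) := by
    rintro s ⟨h0, h1⟩
    rcases le_or_gt s (1/2) with hs | hs
    · have hsin : |Real.sin (π * s)| ≤ π * s := by
        have := sin_upper h0 h1; rwa [min_eq_left (by linarith)] at this
      have hexp : Real.exp (-(4*u) * Real.sin (π*s)^2) ≤ Real.exp (-(16*u) * s^2) := by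
        have h2 : 2 * s ≤ Real.sin (π*s) := by
          have := Real.mul_le_sin (x := π * s) (by positivity) (by nlinarith)
          calc 2 * s = 2 / π * (π * s) := by field_simp
            _ ≤ _ := this
        have hsq : 4 * s^2 ≤ Real.sin (π*s)^2 := by nlinarith
        apply Real.exp_le_exp.2; nlinarith
      have hmain : Real.exp (-(4*u) * Real.sin (π*s)^2) * (2 * |Real.sin (π*s)|) ≤
          (2*π) * (s * Real.exp (-(16*u) * s^2)) := by
        have e1 : (0:ℝ) ≤ Real.exp (-(4*u) * Real.sin (π*s)^2) := (Real.exp_pos _).le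
        have e2 : (0:ℝ) ≤ 2 * |Real.sin (π*s)| := by positivity
        nlinarith [abs_nonneg (Real.sin (π*s)), (Real.exp_pos (-(16*u)*s^2)).le,
          mul_le_mul hexp (by linarith : 2 * |Real.sin (π*s)| ≤ 2 * (π * s)) e2
            (Real.exp_pos _).le]
      nlinarith [mul_nonneg (mul_nonneg (by linarith : (0:ℝ) ≤ 2*π) (by linarith : (0:ℝ) ≤ 1-s))
        (Real.exp_pos (-(16*u) * (1-s)^2)).le]
    · have hrefl : Real.sin (π*s) = Real.sin (π*(1-s)) := by
        rw [show π * (1-s) = π - π * s by ring, Real.sin_pi_sub]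
      have hsin : |Real.sin (π * s)| ≤ π * (1-s) := by
        have := sin_upper h0 h1; rwa [min_eq_right (by linarith)] at this
      have hexp : Real.exp (-(4*u) * Real.sin (π*s)^2) ≤ Real.exp (-(16*u) * (1-s)^2) := by
        have h2 : 2 * (1-s) ≤ Real.sin (π*s) := by
          rw [hrefl]
          have := Real.mul_le_sin (x := π * (1-s)) (by nlinarith) (by nlinarith)
          calc 2 * (1-s) = 2 / π * (π * (1-s)) := by field_simp
            _ ≤ _ := this
        have hsq : 4 * (1-s)^2 ≤ Real.sin (π*s)^2 := by nlinarith
        apply Real.exp_le_exp.2; nlinarith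
      have hmain : Real.exp (-(4*u) * Real.sin (π*s)^2) * (2 * |Real.sin (π*s)|) ≤
          (2*π) * ((1-s) * Real.exp (-(16*u) * (1-s)^2)) := by
        have e2 : (0:ℝ) ≤ 2 * |Real.sin (π*s)| := by positivity
        nlinarith [abs_nonneg (Real.sin (π*s)), (Real.exp_pos (-(16*u)*(1-s)^2)).le,
          mul_le_mul hexp (by linarith : 2 * |Real.sin (π*s)| ≤ 2 * (π * (1-s))) e2
            (Real.exp_pos _).le]
      nlinarith [mul_nonneg (mul_nonneg (by linarith : (0:ℝ) ≤ 2*π) h0)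
        (Real.exp_pos (-(16*u) * s^2)).le]
  have step1 : (∫ s in Icc (0:ℝ) 1,
        Real.exp (-(4*u) * Real.sin (π*s)^2) * (2 * |Real.sin (π*s)|)) ≤
      ∫ s in Icc (0:ℝ) 1, ((2*π) * (s * Real.exp (-(16*u) * s^2)) +
        (2*π) * ((1-s) * Real.exp (-(16*u) * (1-s)^2))) :=
    setIntegral_mono_on (hcont.continuousOn.integrableOn_compact isCompact_Icc)
      (hint1.add hint2) measurableSet_Icc key
  have step2 : (∫ s in Icc (0:ℝ) 1, ((2*π) * (s * Real.exp (-(16*u) * s^2)) +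
        (2*π) * ((1-s) * Real.exp (-(16*u) * (1-s)^2)))) =
      (4*π) * ∫ s in Icc (0:ℝ) 1, s * Real.exp (-(16*u) * s^2) := by
    rw [MeasureTheory.integral_add hint1 hint2]
    have : (∫ s in Icc (0:ℝ) 1, (2*π) * ((1-s) * Real.exp (-(16*u) * (1-s)^2))) =
        ∫ s in Icc (0:ℝ) 1, (2*π) * (s * Real.exp (-(16*u) * s^2)) :=
      reflect_int (fun s => (2*π) * (s * Real.exp (-(16*u) * s^2)))
    rw [this, MeasureTheory.integral_const_mul]
    ring
  have step3 := ftc_bound h16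
  calc (∫ s in Icc (0:ℝ) 1, Real.exp (-(4*u) * Real.sin (π*s)^2) * (2 * |Real.sin (π*s)|))
      ≤ (4*π) * ∫ s in Icc (0:ℝ) 1, s * Real.exp (-(16*u) * s^2) := step1.trans_eq step2
    _ ≤ (4*π) * (2*(16*u))⁻¹ := by nlinarith
    _ = π/(8*u) := by field_simp; ring
    _ ≤ 8/(8*u) := by gcongr; exact Real.pi_le_four.trans (by norm_num)
    _ = u⁻¹ := by field_simp


lemma coord_sum_pos {d : ℕ} (ξ : Fin d → ℝ) (z : Fin d → ℤ) (i : Fin d) :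
    (∑ j, ξ j * (((z + (Pi.single i 1 : Fin d → ℤ)) j : ℤ) : ℝ)) =
      (∑ j, ξ j * (z j : ℝ)) + ξ i := by
  have hco : ∀ j, (((z + (Pi.single i 1 : Fin d → ℤ)) j : ℤ) : ℝ) =
      (z j : ℝ) + (if j = i then (1:ℝ) else 0) := by
    intro j
    rw [Pi.add_apply, Pi.single_apply]
    push_cast
    split_ifs <;> norm_num
  simp_rw [hco, mul_add, Finset.sum_add_distrib]
  congr 1
  simp [mul_ite]

lemma coord_sum_neg {d : ℕ} (ξ : Fin d → ℝ) (z : Fin d → ℤ) (i : Fin d) :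
    (∑ j, ξ j * (((z + -(Pi.single i 1 : Fin d → ℤ)) j : ℤ) : ℝ)) =
      (∑ j, ξ j * (z j : ℝ)) - ξ i := by
  have hco : ∀ j, (((z + -(Pi.single i 1 : Fin d → ℤ)) j : ℤ) : ℝ) =
      (z j : ℝ) - (if j = i then (1:ℝ) else 0) := by
    intro j
    rw [Pi.add_apply, Pi.neg_apply, Pi.single_apply]
    push_cast
    split_ifs <;> ring
  simp_rw [hco, mul_sub, Finset.sum_sub_distrib]
  congr 1
  simp [mul_ite]

end HKGrad

open MeasureTheory Set Real in
/-- Gradient estimate (2.10) of the paper: there is `c > 0` depending only on `d` such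
that for all `γ, t > 0`, `z ∈ ℤ^d` and every coordinate direction `e`,
`|p(t,z) − p(t,z+e)| ≤ c (γt)^{−(d+1)/2}`. -/
theorem heatKernel_gradient_bound
    (d : ℕ) (hd : 1 ≤ d) :
    ∃ c : ℝ, 0 < c ∧ ∀ γ t : ℝ, 0 < γ → 0 < t → ∀ z : Fin d → ℤ, ∀ i : Fin d,
      ∀ e : Fin d → ℤ, (e = Pi.single i 1 ∨ e = -Pi.single i 1) →
      |heatKernel d γ t z - heatKernel d γ t (z + e)| ≤
        c * (γ * t) ^ (-(((d : ℝ) + 1) / 2)) := by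
  classical
  refine ⟨1, one_pos, ?_⟩
  intro γ t hγ ht z i e he
  have hu : 0 < γ * t := mul_pos hγ ht
  set u : ℝ := γ * t with hu_def
  -- the one-dimensional factor functions
  set g : Fin d → ℝ → ℝ := fun j s =>
    Real.exp (-(4*u) * Real.sin (π*s)^2) * (if j = i then 2*|Real.sin (π*s)| else 1)
    with hg_def
  have hgcont : ∀ j, Continuous (g j) := by
    intro j
    rcases eq_or_ne j i with h | h <;> simp only [hg_def, h, if_pos, if_neg, ite_true,
      ite_false, mul_one] <;> fun_prop
  have hgnonneg : ∀ j s, 0 ≤ g j s := by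
    intro j s
    rcases eq_or_ne j i with h | h <;> simp only [hg_def, h, ite_true, ite_false, if_neg,
      mul_one] <;> positivity
  have hIcc_cmpt : IsCompact (Icc (0 : Fin d → ℝ) 1) := isCompact_Icc
  have halpha_cont : Continuous fun ξ : Fin d → ℝ => alphaFn d ξ := by
    unfold alphaFn
    exact continuous_finset_sum _ fun j _ => by fun_prop
  have hsum_cont : ∀ x : Fin d → ℤ, Continuous fun ξ : Fin d → ℝ => ∑ j, ξ j * (x j : ℝ) :=
    fun x => continuous_finset_sum _ fun j _ => by fun_prop
  have hker_cont : ∀ x : Fin d → ℤ, Continuous (fun ξ : Fin d → ℝ =>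
      Real.exp (γ * t * alphaFn d ξ) * Real.cos (2 * π * ∑ j, ξ j * (x j : ℝ))) := fun x =>
    (Real.continuous_exp.comp (continuous_const.mul halpha_cont)).mul
      (Real.continuous_cos.comp (continuous_const.mul (hsum_cont x)))
  have hInt : ∀ x : Fin d → ℤ, IntegrableOn (fun ξ : Fin d → ℝ =>
      Real.exp (γ * t * alphaFn d ξ) * Real.cos (2 * π * ∑ j, ξ j * (x j : ℝ)))
      (Icc (0 : Fin d → ℝ) 1) volume := fun x =>
    ((hker_cont x).continuousOn).integrableOn_compact hIcc_cmpt
  have hprod_cont : Continuous fun ξ : Fin d → ℝ => ∏ j, g j (ξ j) :=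
    continuous_finset_prod _ fun j _ => (hgcont j).comp (continuous_apply j)
  have hprod_int : IntegrableOn (fun ξ : Fin d → ℝ => ∏ j, g j (ξ j))
      (Icc (0 : Fin d → ℝ) 1) volume :=
    hprod_cont.continuousOn.integrableOn_compact hIcc_cmpt
  -- Step A : the difference as a single integral
  have hdiff : heatKernel d γ t z - heatKernel d γ t (z + e) =
      ∫ ξ in Icc (0 : Fin d → ℝ) 1, Real.exp (γ * t * alphaFn d ξ) *
        (Real.cos (2 * π * ∑ j, ξ j * (z j : ℝ)) -
         Real.cos (2 * π * ∑ j, ξ j * ((z + e) j : ℝ))) := by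
    unfold heatKernel
    rw [← MeasureTheory.integral_sub (hInt z) (hInt (z + e))]
    congr 1
    funext ξ
    ring
  -- exponential as a product
  have hexp_eq : ∀ ξ : Fin d → ℝ, Real.exp (γ * t * alphaFn d ξ) =
      ∏ j, Real.exp (-(4*u) * Real.sin (π * ξ j)^2) := by
    intro ξ
    rw [← Real.exp_sum]
    congr 1
    unfold alphaFn
    rw [Finset.mul_sum]
    refine Finset.sum_congr rfl fun j _ => ?_
    have hc : Real.cos (2 * π * ξ j) = 1 - 2 * Real.sin (π * ξ j)^2 := by
      have h := Real.sin_sq_eq_half_sub (π * ξ j)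
      rw [show 2 * (π * ξ j) = 2 * π * ξ j by ring] at h
      linarith
    rw [hc, hu_def]
    ring
  -- Step B : pointwise bound
  have hpoint : ∀ ξ ∈ Icc (0 : Fin d → ℝ) 1,
      |Real.exp (γ * t * alphaFn d ξ) *
        (Real.cos (2 * π * ∑ j, ξ j * (z j : ℝ)) -
         Real.cos (2 * π * ∑ j, ξ j * ((z + e) j : ℝ)))| ≤ ∏ j, g j (ξ j) := by
    intro ξ _
    have hprod : (∏ j, g j (ξ j)) =
        Real.exp (γ * t * alphaFn d ξ) * (2 * |Real.sin (π * ξ i)|) := by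
      simp only [hg_def]
      rw [Finset.prod_mul_distrib, Finset.prod_ite_eq' Finset.univ i
        (fun j => 2 * |Real.sin (π * ξ j)|), if_pos (Finset.mem_univ i), ← hexp_eq]
    have hcos : |Real.cos (2 * π * ∑ j, ξ j * (z j : ℝ)) -
        Real.cos (2 * π * ∑ j, ξ j * ((z + e) j : ℝ))| ≤ 2 * |Real.sin (π * ξ i)| := by
      have habs_sin : ∀ y : ℝ, |Real.sin y| ≤ 1 := fun y =>
        abs_le.mpr ⟨Real.neg_one_le_sin y, Real.sin_le_one y⟩
      rcases he with rfl | rfl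
      · have hsum := HKGrad.coord_sum_pos ξ z i
        rw [hsum, Real.cos_sub_cos]
        have harg : (2 * π * (∑ j, ξ j * (z j : ℝ)) -
            2 * π * ((∑ j, ξ j * (z j : ℝ)) + ξ i)) / 2 = -(π * ξ i) := by ring
        rw [harg, Real.sin_neg]
        rw [abs_mul, abs_mul]
        have h1 := habs_sin ((2 * π * (∑ j, ξ j * (z j : ℝ)) +
            2 * π * ((∑ j, ξ j * (z j : ℝ)) + ξ i)) / 2)
        rw [abs_neg, abs_neg]
        have h2 : |(2:ℝ)| = 2 := by norm_num
        rw [h2]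
        nlinarith [abs_nonneg (Real.sin (π * ξ i)), abs_nonneg
          (Real.sin ((2 * π * (∑ j, ξ j * (z j : ℝ)) +
            2 * π * ((∑ j, ξ j * (z j : ℝ)) + ξ i)) / 2))]
      · have hsum := HKGrad.coord_sum_neg ξ z i
        rw [hsum, Real.cos_sub_cos]
        have harg : (2 * π * (∑ j, ξ j * (z j : ℝ)) -
            2 * π * ((∑ j, ξ j * (z j : ℝ)) - ξ i)) / 2 = π * ξ i := by ring
        rw [harg]
        rw [abs_mul, abs_mul, abs_neg]
        have h1 := habs_sin ((2 * π * (∑ j, ξ j * (z j : ℝ)) +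
            2 * π * ((∑ j, ξ j * (z j : ℝ)) - ξ i)) / 2)
        have h2 : |(2:ℝ)| = 2 := by norm_num
        rw [h2]
        nlinarith [abs_nonneg (Real.sin (π * ξ i)), abs_nonneg
          (Real.sin ((2 * π * (∑ j, ξ j * (z j : ℝ)) +
            2 * π * ((∑ j, ξ j * (z j : ℝ)) - ξ i)) / 2))]
    rw [abs_mul, Real.abs_exp, hprod]
    exact mul_le_mul_of_nonneg_left hcos (Real.exp_pos _).le
  -- Step B' : bound the integral
  have hbound1 : |heatKernel d γ t z - heatKernel d γ t (z + e)| ≤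
      ∫ ξ in Icc (0 : Fin d → ℝ) 1, ∏ j, g j (ξ j) := by
    rw [hdiff, ← Real.norm_eq_abs]
    refine MeasureTheory.norm_integral_le_of_norm_le hprod_int ?_
    refine (MeasureTheory.ae_restrict_iff' measurableSet_Icc).2 (Filter.Eventually.of_forall ?_)
    intro ξ hξ
    rw [Real.norm_eq_abs]
    exact hpoint ξ hξ
  -- Step C : Fubini
  have hmem_iff : ∀ ξ : Fin d → ℝ, ξ ∈ Icc (0 : Fin d → ℝ) 1 ↔ ∀ j, ξ j ∈ Icc (0:ℝ) 1 := by
    intro ξ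
    simp [Set.mem_Icc, Pi.le_def, forall_and]
  have hfub : (∫ ξ in Icc (0 : Fin d → ℝ) 1, ∏ j, g j (ξ j)) =
      ∏ j, ∫ s in Icc (0:ℝ) 1, g j s := by
    rw [← MeasureTheory.integral_indicator measurableSet_Icc]
    have hind : ∀ ξ : Fin d → ℝ, (Icc (0 : Fin d → ℝ) 1).indicator
        (fun ξ => ∏ j, g j (ξ j)) ξ = ∏ j, (Icc (0:ℝ) 1).indicator (g j) (ξ j) := by
      intro ξ
      by_cases hξ : ξ ∈ Icc (0 : Fin d → ℝ) 1
      · rw [Set.indicator_of_mem hξ]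
        exact Finset.prod_congr rfl fun j _ =>
          (Set.indicator_of_mem ((hmem_iff ξ).1 hξ j) (g j)).symm
      · rw [Set.indicator_of_notMem hξ]
        obtain ⟨j, hj⟩ := not_forall.1 (fun h => hξ ((hmem_iff ξ).2 h))
        exact (Finset.prod_eq_zero (Finset.mem_univ j)
          (Set.indicator_of_notMem hj (g j))).symm
    simp_rw [hind]
    rw [MeasureTheory.integral_fintype_prod_volume_eq_prod
      (f := fun j s => (Icc (0:ℝ) 1).indicator (g j) s)]
    exact Finset.prod_congr rfl fun j _ =>
      MeasureTheory.integral_indicator measurableSet_Icc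
  -- Step D : split the product
  set I : ℝ := ∫ s in Icc (0:ℝ) 1, Real.exp (-(4*u) * Real.sin (π*s)^2) with hI_def
  set J : ℝ := ∫ s in Icc (0:ℝ) 1,
      Real.exp (-(4*u) * Real.sin (π*s)^2) * (2 * |Real.sin (π*s)|) with hJ_def
  have hfactor : ∀ j, (∫ s in Icc (0:ℝ) 1, g j s) = if j = i then J else I := by
    intro j
    rcases eq_or_ne j i with h | h
    · rw [if_pos h]
      rw [hJ_def]
      congr 1
      funext s
      simp [hg_def, h]
    · rw [if_neg h]
      rw [hI_def]
      congr 1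
      funext s
      simp [hg_def, h]
  have hsplit : (∏ j, ∫ s in Icc (0:ℝ) 1, g j s) = J * I ^ (d - 1) := by
    simp_rw [hfactor]
    rw [← Finset.mul_prod_erase Finset.univ _ (Finset.mem_univ i), if_pos rfl]
    congr 1
    rw [Finset.prod_congr rfl (fun j hj => if_neg (Finset.ne_of_mem_erase hj)),
      Finset.prod_const, Finset.card_erase_of_mem (Finset.mem_univ i), Finset.card_univ,
      Fintype.card_fin]
  -- Step E : the one-dimensional bounds
  have hInn : 0 ≤ I := HKGrad.lemI_nonneg
  have hI_le : I ≤ (Real.sqrt u)⁻¹ := HKGrad.lemI hu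
  have hJ_le : J ≤ u⁻¹ := HKGrad.lemJ hu
  have hsqrt_pos : 0 < Real.sqrt u := Real.sqrt_pos.2 hu
  have hmul_le : J * I ^ (d - 1) ≤ u⁻¹ * ((Real.sqrt u)⁻¹) ^ (d - 1) := by
    have hJnn : 0 ≤ J := setIntegral_nonneg measurableSet_Icc fun s _ => by positivity
    exact mul_le_mul hJ_le (pow_le_pow_left₀ hInn hI_le _) (pow_nonneg hInn _)
      (inv_nonneg.2 hu.le)
  have hrpow : u⁻¹ * ((Real.sqrt u)⁻¹) ^ (d - 1) = u ^ (-(((d : ℝ) + 1) / 2)) := by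
    have e1 : (Real.sqrt u)⁻¹ = u ^ (-(1/2) : ℝ) := by
      rw [Real.sqrt_eq_rpow, Real.rpow_neg hu.le]
    have e2 : ((u ^ (-(1/2) : ℝ)) : ℝ) ^ (d - 1) = u ^ ((-(1/2) : ℝ) * ((d - 1 : ℕ) : ℝ)) := by
      rw [Real.rpow_mul hu.le, Real.rpow_natCast]
    have e3 : u⁻¹ = u ^ (-1 : ℝ) := by rw [Real.rpow_neg_one]
    rw [e1, e2, e3, ← Real.rpow_add hu]
    congr 1
    rw [Nat.cast_sub hd, Nat.cast_one]
    ring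
  rw [one_mul]
  calc |heatKernel d γ t z - heatKernel d γ t (z + e)|
      ≤ ∫ ξ in Icc (0 : Fin d → ℝ) 1, ∏ j, g j (ξ j) := hbound1
    _ = J * I ^ (d - 1) := by rw [hfub, hsplit]
    _ ≤ u⁻¹ * ((Real.sqrt u)⁻¹) ^ (d - 1) := hmul_le
    _ = u ^ (-(((d : ℝ) + 1) / 2)) := hrpow
end
end

section
/- There exists a constant c > 0, depending only on the dimension d, such that for all γ > 0, t > 0, M ∈ ℕ and L ∈ ℕ, one has p⁺_M(t,0) − p⁺_M(t,L) ≤ c L (γt)^{−(d+1)/2}, i.e. the drop of the crown-wise maximum of the ball-averaged heat kernel between the origin and the crown at distance L is at most c L (γt)^{−(d+1)/2}. -/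
open scoped Real BigOperators

noncomputable section

open MeasureTheory

def gFn (s u : ℝ) : ℝ := Real.exp (2 * s * (Real.cos (2 * Real.pi * u) - 1))

lemma gFn_cont (s : ℝ) : Continuous (gFn s) := by unfold gFn; continuity

lemma cos_quad_half {u : ℝ} (h0 : 0 ≤ u) (h1 : u ≤ 1/2) :
    Real.cos (2 * Real.pi * u) - 1 ≤ -(8 * u ^ 2) := by
  have hπ := Real.pi_pos
  have hs : 2 * u ≤ Real.sin (Real.pi * u) := by
    have h := Real.mul_le_sin (x := Real.pi * u) (by positivity) (by nlinarith)
    calc 2 * u = 2 / Real.pi * (Real.pi * u) := by field_simp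
    _ ≤ Real.sin (Real.pi * u) := h
  have hc : Real.cos (2 * Real.pi * u) = 1 - 2 * Real.sin (Real.pi * u) ^ 2 := by
    have h2 : 2 * Real.pi * u = 2 * (Real.pi * u) := by ring
    rw [h2, Real.cos_two_mul]
    have := Real.sin_sq_add_cos_sq (Real.pi * u)
    nlinarith
  nlinarith [hs, h0]

lemma cos_quad {u : ℝ} (h0 : 0 ≤ u) (h1 : u ≤ 1) :
    Real.cos (2 * Real.pi * u) - 1 ≤ -(8 * (min u (1 - u)) ^ 2) := by
  rcases le_or_gt u (1/2) with h | h
  · rw [min_eq_left (by linarith)]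
    exact cos_quad_half h0 h
  · rw [min_eq_right (by linarith)]
    have key := cos_quad_half (u := 1 - u) (by linarith) (by linarith)
    have heq : Real.cos (2 * Real.pi * u) = Real.cos (2 * Real.pi * (1 - u)) := by
      have h3 : 2 * Real.pi * (1 - u) = 2 * Real.pi - 2 * Real.pi * u := by ring
      rw [h3, Real.cos_two_pi_sub]
    linarith [key, heq.le, heq.ge]

lemma gFn_pos (s u : ℝ) : 0 < gFn s u := Real.exp_pos _

lemma gFn_le_one {s : ℝ} (hs : 0 ≤ s) (u : ℝ) : gFn s u ≤ 1 := by
  rw [gFn, Real.exp_le_one_iff]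
  have := Real.cos_le_one (2 * Real.pi * u)
  nlinarith

lemma gFn_le_gauss {s u : ℝ} (hs : 0 ≤ s) (h0 : 0 ≤ u) (h1 : u ≤ 1) :
    gFn s u ≤ Real.exp (-(16*s) * (min u (1 - u)) ^ 2) := by
  rw [gFn, Real.exp_le_exp]
  nlinarith [cos_quad h0 h1]

lemma min_half {u : ℝ} : min u (1 - u) ≤ 1/2 := by
  rcases le_total u (1/2) with h | h
  · exact le_trans (min_le_left _ _) h
  · exact le_trans (min_le_right _ _) (by linarith)

/-- `I0 ≤ 1`. -/
lemma I0_le_one {s : ℝ} (hs : 0 ≤ s) : ∫ u in Set.Icc (0:ℝ) 1, gFn s u ≤ 1 := by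
  calc ∫ u in Set.Icc (0:ℝ) 1, gFn s u ≤ ∫ _u in Set.Icc (0:ℝ) 1, (1:ℝ) :=
      setIntegral_mono_on ((gFn_cont s).integrableOn_Icc)
        ((integrableOn_const_iff (C := (1:ℝ))).2 (Or.inr (measure_Icc_lt_top (μ := volume))))
        measurableSet_Icc (fun x _ => gFn_le_one hs x)
    _ = 1 := by simp [Real.volume_Icc]

lemma I0_nonneg (s : ℝ) : 0 ≤ ∫ u in Set.Icc (0:ℝ) 1, gFn s u :=
  setIntegral_nonneg measurableSet_Icc fun x _ => (gFn_pos s x).le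

/-- `I0 ≤ 1/√s`. -/
lemma I0_le_invsqrt {s : ℝ} (hs : 0 < s) :
    ∫ u in Set.Icc (0:ℝ) 1, gFn s u ≤ 1 / Real.sqrt s := by
  have hb : (0:ℝ) < 16*s := by positivity
  have hi1 : Integrable (fun u : ℝ => Real.exp (-(16*s) * u^2)) :=
    integrable_exp_neg_mul_sq hb
  have hi2 : Integrable (fun u : ℝ => Real.exp (-(16*s) * (1-u)^2)) := by
    have := (integrable_comp_sub_left (fun v : ℝ => Real.exp (-(16*s) * v^2)) 1).2 hi1
    simpa using this
  have step1 : ∫ u in Set.Icc (0:ℝ) 1, gFn s u ≤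
      ∫ u in Set.Icc (0:ℝ) 1,
        (Real.exp (-(16*s) * u^2) + Real.exp (-(16*s) * (1-u)^2)) := by
    refine setIntegral_mono_on ((gFn_cont s).integrableOn_Icc)
      ((hi1.add hi2).integrableOn) measurableSet_Icc (fun u hu => ?_)
    obtain ⟨h0, h1⟩ := hu
    refine le_trans (gFn_le_gauss hs.le h0 h1) ?_
    rcases min_cases u (1-u) with ⟨h, _⟩ | ⟨h, _⟩ <;> rw [h]
    · exact le_add_of_nonneg_right (Real.exp_pos _).le
    · exact le_add_of_nonneg_left (Real.exp_pos _).le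
  have step2 : ∫ u in Set.Icc (0:ℝ) 1,
        (Real.exp (-(16*s) * u^2) + Real.exp (-(16*s) * (1-u)^2)) ≤
      2 * Real.sqrt (Real.pi / (16*s)) := by
    rw [integral_add hi1.integrableOn hi2.integrableOn]
    have a1 : ∫ u in Set.Icc (0:ℝ) 1, Real.exp (-(16*s) * u^2) ≤ Real.sqrt (Real.pi / (16*s)) := by
      calc ∫ u in Set.Icc (0:ℝ) 1, Real.exp (-(16*s) * u^2)
          ≤ ∫ u : ℝ, Real.exp (-(16*s) * u^2) :=
            setIntegral_le_integral hi1 (Filter.Eventually.of_forall fun x => by positivity)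
        _ = Real.sqrt (Real.pi / (16*s)) := integral_gaussian (16*s)
    have a2 : ∫ u in Set.Icc (0:ℝ) 1, Real.exp (-(16*s) * (1-u)^2) ≤
        Real.sqrt (Real.pi / (16*s)) := by
      calc ∫ u in Set.Icc (0:ℝ) 1, Real.exp (-(16*s) * (1-u)^2)
          ≤ ∫ u : ℝ, Real.exp (-(16*s) * (1-u)^2) :=
            setIntegral_le_integral hi2 (Filter.Eventually.of_forall fun x => by positivity)
        _ = ∫ u : ℝ, Real.exp (-(16*s) * u^2) :=
            integral_sub_left_eq_self (fun v : ℝ => Real.exp (-(16*s) * v^2)) volume 1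
        _ = Real.sqrt (Real.pi / (16*s)) := integral_gaussian (16*s)
    linarith
  have step3 : 2 * Real.sqrt (Real.pi / (16*s)) ≤ 1 / Real.sqrt s := by
    have hsq : Real.sqrt (Real.pi / (16*s)) ≤ Real.sqrt (4 / (16*s)) := by
      apply Real.sqrt_le_sqrt
      exact (div_le_div_iff_of_pos_right (by positivity)).2 Real.pi_le_four
    have h4 : Real.sqrt (4 / (16*s)) = 1 / (2 * Real.sqrt s) := by
      rw [show (4:ℝ) / (16*s) = 1 / (4*s) by ring, one_div, Real.sqrt_inv,
        show (4:ℝ)*s = 2^2*s by norm_num, Real.sqrt_mul (by positivity) s,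
        Real.sqrt_sq (by norm_num : (0:ℝ) ≤ 2), one_div]
    have hssq : 0 < Real.sqrt s := Real.sqrt_pos.2 hs
    have h5 : 2 * (1/(2*Real.sqrt s)) = 1 / Real.sqrt s := by field_simp
    linarith
  linarith

lemma I1_nonneg (s : ℝ) : 0 ≤ ∫ u in Set.Icc (0:ℝ) 1, gFn s u * min u (1-u) := by
  apply setIntegral_nonneg measurableSet_Icc
  intro x hx
  exact mul_nonneg (gFn_pos s x).le (le_min hx.1 (by linarith [hx.2]))

lemma I1_cont (s : ℝ) : Continuous (fun u : ℝ => gFn s u * min u (1-u)) := by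
  apply (gFn_cont s).mul
  exact continuous_id.min (continuous_const.sub continuous_id)

lemma I1_le_half {s : ℝ} (hs : 0 ≤ s) :
    ∫ u in Set.Icc (0:ℝ) 1, gFn s u * min u (1-u) ≤ 1/2 := by
  calc ∫ u in Set.Icc (0:ℝ) 1, gFn s u * min u (1-u)
      ≤ ∫ _u in Set.Icc (0:ℝ) 1, (1/2:ℝ) := by
        refine setIntegral_mono_on ((I1_cont s).integrableOn_Icc)
          ((integrableOn_const_iff (C := (1/2:ℝ))).2 (Or.inr (measure_Icc_lt_top (μ := volume))))
          measurableSet_Icc (fun x hx => ?_)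
        have h1 : gFn s x ≤ 1 := gFn_le_one hs x
        have h2 : min x (1-x) ≤ 1/2 := min_half
        have h3 : 0 ≤ min x (1-x) := le_min hx.1 (by linarith [hx.2])
        nlinarith [gFn_pos s x]
    _ = 1/2 := by simp [Real.volume_Icc]

/-- `∫_0^1 u e^{-16 s u²} du ≤ 1/(32 s)`. -/
lemma J_le {s : ℝ} (hs : 0 < s) :
    ∫ u in Set.Icc (0:ℝ) 1, u * Real.exp (-(16*s) * u^2) ≤ (32*s)⁻¹ := by
  have hder : ∀ u : ℝ, HasDerivAt (fun v : ℝ => -(32*s)⁻¹ * Real.exp (-(16*s) * v^2))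
      (u * Real.exp (-(16*s) * u^2)) u := by
    intro u
    have h1 : HasDerivAt (fun v : ℝ => -(16*s) * v^2) (-(16*s) * (2*u)) u := by
      simpa [mul_comm] using (hasDerivAt_pow 2 u).const_mul (-(16*s))
    have h3 := (h1.exp).const_mul (-(32*s)⁻¹)
    refine h3.congr_deriv ?_
    have hs0 : s ≠ 0 := hs.ne'
    field_simp
    ring
  have hcont : Continuous (fun u : ℝ => u * Real.exp (-(16*s) * u^2)) := by continuity
  have heq : ∫ u in Set.Icc (0:ℝ) 1, u * Real.exp (-(16*s) * u^2)
      = ∫ u in (0:ℝ)..1, u * Real.exp (-(16*s) * u^2) := by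
    rw [intervalIntegral.integral_of_le (by norm_num : (0:ℝ) ≤ 1),
      integral_Icc_eq_integral_Ioc]
  rw [heq, intervalIntegral.integral_eq_sub_of_hasDerivAt (fun u _ => hder u)
    (hcont.intervalIntegrable 0 1)]
  have h0 : Real.exp (-(16*s) * (0:ℝ)^2) = 1 := by norm_num
  have hp : 0 < Real.exp (-(16*s) * (1:ℝ)^2) := Real.exp_pos _
  have hip : (0:ℝ) < (32*s)⁻¹ := by positivity
  rw [h0]
  nlinarith [hp, hip, mul_pos hip hp]

lemma I1_le_inv {s : ℝ} (hs : 0 < s) :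
    ∫ u in Set.Icc (0:ℝ) 1, gFn s u * min u (1-u) ≤ 1/s := by
  have hcont1 : Continuous (fun u : ℝ => u * Real.exp (-(16*s) * u^2)) := by continuity
  have hcont2 : Continuous (fun u : ℝ => (1-u) * Real.exp (-(16*s) * (1-u)^2)) := by continuity
  have step1 : ∫ u in Set.Icc (0:ℝ) 1, gFn s u * min u (1-u) ≤
      ∫ u in Set.Icc (0:ℝ) 1,
        (u * Real.exp (-(16*s) * u^2) + (1-u) * Real.exp (-(16*s) * (1-u)^2)) := by
    refine setIntegral_mono_on ((I1_cont s).integrableOn_Icc)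
      ((hcont1.add hcont2).integrableOn_Icc) measurableSet_Icc (fun u hu => ?_)
    obtain ⟨h0, h1⟩ := hu
    have hg := gFn_le_gauss hs.le h0 h1
    rcases min_cases u (1-u) with ⟨h, h'⟩ | ⟨h, h'⟩ <;> rw [h] at hg ⊢
    · have : gFn s u * u ≤ Real.exp (-(16*s) * u^2) * u :=
        mul_le_mul_of_nonneg_right hg h0
      nlinarith [mul_nonneg (sub_nonneg.2 h1) (Real.exp_pos (-(16*s) * (1-u)^2)).le]
    · have : gFn s u * (1-u) ≤ Real.exp (-(16*s) * (1-u)^2) * (1-u) :=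
        mul_le_mul_of_nonneg_right hg (by linarith)
      nlinarith [mul_nonneg h0 (Real.exp_pos (-(16*s) * u^2)).le]
  have hsub : ∫ u in Set.Icc (0:ℝ) 1, (1-u) * Real.exp (-(16*s) * (1-u)^2)
      = ∫ u in Set.Icc (0:ℝ) 1, u * Real.exp (-(16*s) * u^2) := by
    rw [integral_Icc_eq_integral_Ioc, integral_Icc_eq_integral_Ioc,
      ← intervalIntegral.integral_of_le (by norm_num : (0:ℝ) ≤ 1),
      ← intervalIntegral.integral_of_le (by norm_num : (0:ℝ) ≤ 1)]
    have := intervalIntegral.integral_comp_sub_left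
      (a := (0:ℝ)) (b := 1) (fun v : ℝ => v * Real.exp (-(16*s) * v^2)) 1
    simpa using this
  have step2 : ∫ u in Set.Icc (0:ℝ) 1,
      (u * Real.exp (-(16*s) * u^2) + (1-u) * Real.exp (-(16*s) * (1-u)^2)) ≤ 2 * (32*s)⁻¹ := by
    rw [integral_add hcont1.integrableOn_Icc hcont2.integrableOn_Icc, hsub]
    linarith [J_le hs]
  have : 2 * (32*s)⁻¹ ≤ 1/s := by
    rw [one_div]
    rw [show (32*s)⁻¹ = 32⁻¹ * s⁻¹ by rw [mul_inv]]
    have : (0:ℝ) ≤ s⁻¹ := by positivity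
    nlinarith
  linarith


lemma box_prod {d : ℕ} (h : Fin d → ℝ → ℝ) :
    ∫ ξ in Set.Icc (0 : Fin d → ℝ) 1, ∏ j, h j (ξ j) =
      ∏ j, ∫ u in Set.Icc (0:ℝ) 1, h j u := by
  have hset : Set.Icc (0 : Fin d → ℝ) 1 = Set.pi Set.univ (fun _ => Set.Icc (0:ℝ) 1) := by
    rw [Set.pi_univ_Icc]; rfl
  rw [hset, ← MeasureTheory.integral_indicator
    (MeasurableSet.univ_pi (fun _ => measurableSet_Icc))]
  have hind : (Set.pi Set.univ (fun _ : Fin d => Set.Icc (0:ℝ) 1)).indicator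
      (fun ξ : Fin d → ℝ => ∏ j, h j (ξ j)) =
      fun ξ : Fin d → ℝ => ∏ j, (Set.Icc (0:ℝ) 1).indicator (h j) (ξ j) := by
    funext ξ
    by_cases hξ : ξ ∈ Set.pi Set.univ (fun _ : Fin d => Set.Icc (0:ℝ) 1)
    · rw [Set.indicator_of_mem hξ]
      exact Finset.prod_congr rfl fun j _ =>
        (Set.indicator_of_mem (hξ j (Set.mem_univ j)) _).symm
    · rw [Set.indicator_of_notMem hξ]
      rw [Set.mem_univ_pi] at hξ; push_neg at hξ
      obtain ⟨j, hj⟩ := hξ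
      exact (Finset.prod_eq_zero (Finset.mem_univ j) (Set.indicator_of_notMem hj _)).symm
  rw [hind, MeasureTheory.integral_fintype_prod_volume_eq_prod
    (f := fun (j : Fin d) (u : ℝ) => (Set.Icc (0:ℝ) 1).indicator (h j) u)]
  exact Finset.prod_congr rfl fun j _ => MeasureTheory.integral_indicator measurableSet_Icc

lemma key_bound (d : ℕ) (hd : 0 < d) {s : ℝ} (hs : 0 < s) :
    ∫ ξ in Set.Icc (0 : Fin d → ℝ) 1,
        Real.exp (s * alphaFn d ξ) * min (ξ ⟨0, hd⟩) (1 - ξ ⟨0, hd⟩)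
      ≤ s ^ (-(((d:ℝ)+1)/2)) := by
  set i0 : Fin d := ⟨0, hd⟩ with hi0
  set h : Fin d → ℝ → ℝ := fun j u => gFn s u * (if j = i0 then min u (1-u) else 1) with hh
  have hint : ∀ ξ : Fin d → ℝ,
      Real.exp (s * alphaFn d ξ) * min (ξ i0) (1 - ξ i0) = ∏ j, h j (ξ j) := by
    intro ξ
    rw [hh]
    rw [Finset.prod_mul_distrib]
    congr 1
    · rw [alphaFn, Finset.mul_sum, Real.exp_sum]
      exact Finset.prod_congr rfl fun j _ => by rw [gFn]; ring_nf
    · rw [Finset.prod_ite_eq' Finset.univ i0 (fun j => min (ξ j) (1 - ξ j))]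
      simp
  rw [show (fun ξ : Fin d → ℝ => Real.exp (s * alphaFn d ξ) * min (ξ i0) (1 - ξ i0))
      = fun ξ => ∏ j, h j (ξ j) from funext hint]
  rw [box_prod h]
  have hval : ∀ j, (∫ u in Set.Icc (0:ℝ) 1, h j u) =
      if j = i0 then (∫ u in Set.Icc (0:ℝ) 1, gFn s u * min u (1-u))
      else (∫ u in Set.Icc (0:ℝ) 1, gFn s u) := by
    intro j; by_cases hj : j = i0 <;> simp [hh, hj]
  rw [Finset.prod_congr rfl (fun j _ => hval j),
    ← Finset.mul_prod_erase Finset.univ _ (Finset.mem_univ i0), if_pos rfl,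
    Finset.prod_congr rfl (fun j hj => if_neg (Finset.ne_of_mem_erase hj)),
    Finset.prod_const, Finset.card_erase_of_mem (Finset.mem_univ i0), Finset.card_univ,
    Fintype.card_fin]
  set A := ∫ u in Set.Icc (0:ℝ) 1, gFn s u * min u (1-u) with hA
  set B := ∫ u in Set.Icc (0:ℝ) 1, gFn s u with hB
  have hA0 : 0 ≤ A := I1_nonneg s
  have hB0 : 0 ≤ B := I0_nonneg s
  rcases le_total s 1 with hs1 | hs1
  · have h1 : A * B ^ (d-1) ≤ 1 := by
      have hB1 : B ^ (d-1) ≤ 1 := pow_le_one₀ hB0 (I0_le_one hs.le)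
      nlinarith [I1_le_half (s := s) hs.le]
    have h2 : (1:ℝ) ≤ s ^ (-(((d:ℝ)+1)/2)) := by
      refine Real.one_le_rpow_of_pos_of_le_one_of_nonpos hs hs1 ?_
      have : (0:ℝ) ≤ ((d:ℝ)+1)/2 := by positivity
      linarith
    linarith
  · have hAle : A ≤ s ^ (-1 : ℝ) := by
      rw [Real.rpow_neg_one]
      simpa [one_div] using I1_le_inv (s := s) hs
    have hBle : B ≤ s ^ (-(1/2) : ℝ) := by
      have h := I0_le_invsqrt (s := s) hs
      have he : (1:ℝ)/Real.sqrt s = s ^ (-(1/2) : ℝ) := by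
        rw [one_div, Real.sqrt_eq_rpow, ← Real.rpow_neg hs.le]
      rwa [he] at h
    calc A * B ^ (d-1) ≤ s ^ (-1:ℝ) * (s ^ (-(1/2):ℝ)) ^ (d-1) :=
        mul_le_mul hAle (pow_le_pow_left₀ hB0 hBle _) (pow_nonneg hB0 _)
          (Real.rpow_nonneg hs.le _)
      _ = s ^ (-(((d:ℝ)+1)/2)) := by
        rw [← Real.rpow_natCast (s ^ (-(1/2):ℝ)) (d-1), ← Real.rpow_mul hs.le,
          ← Real.rpow_add hs]
        congr 1
        rw [Nat.cast_sub hd]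
        push_cast
        ring


lemma cos_diff_le (a b : ℝ) : |Real.cos a - Real.cos b| ≤ |a - b| := by
  rw [Real.cos_sub_cos]
  rw [show (-2) * Real.sin ((a+b)/2) * Real.sin ((a-b)/2)
      = -(2 * Real.sin ((a+b)/2) * Real.sin ((a-b)/2)) by ring, abs_neg, abs_mul, abs_mul,
    abs_two]
  have h1 : |Real.sin ((a+b)/2)| ≤ 1 := Real.abs_sin_le_one _
  have h2 : |Real.sin ((a-b)/2)| ≤ |(a-b)/2| := Real.abs_sin_le_abs
  have h3 : |(a-b)/2| = |a-b|/2 := by rw [abs_div, abs_two]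
  have h4 : (0:ℝ) ≤ |Real.sin ((a-b)/2)| := abs_nonneg _
  nlinarith [abs_nonneg (Real.sin ((a+b)/2)), abs_nonneg (a-b)]

lemma cos_phase {A ξ1 : ℝ} (h0 : 0 ≤ ξ1) (h1 : ξ1 ≤ 1) :
    |Real.cos A - Real.cos (A + 2*Real.pi*ξ1)| ≤ 2*Real.pi * min ξ1 (1-ξ1) := by
  have hπ := Real.pi_pos
  have hb1 : |Real.cos A - Real.cos (A + 2*Real.pi*ξ1)| ≤ 2*Real.pi*ξ1 := by
    have h := cos_diff_le A (A + 2*Real.pi*ξ1)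
    have : |A - (A + 2*Real.pi*ξ1)| = 2*Real.pi*ξ1 := by
      rw [show A - (A + 2*Real.pi*ξ1) = -(2*Real.pi*ξ1) by ring, abs_neg,
        abs_of_nonneg (by positivity)]
    linarith [h, this.le, this.ge]
  have hb2 : |Real.cos A - Real.cos (A + 2*Real.pi*ξ1)| ≤ 2*Real.pi*(1-ξ1) := by
    have hper : Real.cos (A + 2*Real.pi*ξ1) = Real.cos (A + 2*Real.pi*ξ1 - 2*Real.pi) :=
      (Real.cos_sub_two_pi _).symm
    rw [hper]
    have h := cos_diff_le A (A + 2*Real.pi*ξ1 - 2*Real.pi)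
    have : |A - (A + 2*Real.pi*ξ1 - 2*Real.pi)| = 2*Real.pi*(1-ξ1) := by
      rw [show A - (A + 2*Real.pi*ξ1 - 2*Real.pi) = 2*Real.pi*(1-ξ1) by ring,
        abs_of_nonneg (by nlinarith)]
    linarith [h, this.le, this.ge]
  rcases min_cases ξ1 (1-ξ1) with ⟨h, _⟩ | ⟨h, _⟩ <;> rw [h]
  · exact hb1
  · exact hb2

lemma hk_integrand_cont (d : ℕ) (γ t : ℝ) (c : Fin d → ℤ) :
    Continuous (fun ξ : Fin d → ℝ =>
      Real.exp (γ * t * alphaFn d ξ) * Real.cos (2 * Real.pi * ∑ j, ξ j * (c j : ℝ))) := by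
  unfold alphaFn
  apply Continuous.mul
  · apply Real.continuous_exp.comp
    apply Continuous.mul continuous_const
    exact continuous_finset_sum _ fun j _ => by continuity
  · apply Real.continuous_cos.comp
    apply Continuous.mul continuous_const
    exact continuous_finset_sum _ fun j _ => by continuity

lemma H_cont (d : ℕ) (s : ℝ) (i0 : Fin d) :
    Continuous (fun ξ : Fin d → ℝ =>
      Real.exp (s * alphaFn d ξ) * (2 * Real.pi * min (ξ i0) (1 - ξ i0))) := by
  unfold alphaFn
  apply Continuous.mul
  · apply Real.continuous_exp.comp
    apply Continuous.mul continuous_const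
    exact continuous_finset_sum _ fun j _ => by continuity
  · apply Continuous.mul continuous_const
    exact (continuous_apply i0).min (continuous_const.sub (continuous_apply i0))

lemma hk_grad (d : ℕ) (hd : 0 < d) {γ t : ℝ} (hγ : 0 < γ) (ht : 0 < t) (x : Fin d → ℤ) :
    heatKernel d γ t x - heatKernel d γ t (x + Pi.single ⟨0,hd⟩ 1) ≤
      2 * Real.pi * (γ*t) ^ (-(((d:ℝ)+1)/2)) := by
  have hπ := Real.pi_pos
  set i0 : Fin d := ⟨0,hd⟩ with hi0
  set y : Fin d → ℤ := x + Pi.single i0 1 with hy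
  have hs : 0 < γ * t := mul_pos hγ ht
  set F := fun ξ : Fin d → ℝ =>
    Real.exp (γ*t * alphaFn d ξ) * Real.cos (2*Real.pi*∑ j, ξ j * (x j : ℝ)) with hF
  set G := fun ξ : Fin d → ℝ =>
    Real.exp (γ*t * alphaFn d ξ) *
      Real.cos (2*Real.pi*∑ j, ξ j * (y j : ℝ)) with hG
  set H := fun ξ : Fin d → ℝ =>
    Real.exp (γ*t * alphaFn d ξ) * (2*Real.pi * min (ξ i0) (1 - ξ i0)) with hH
  have hFi : IntegrableOn F (Set.Icc (0 : Fin d → ℝ) 1) volume :=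
    (hk_integrand_cont d γ t x).integrableOn_Icc
  have hGi : IntegrableOn G (Set.Icc (0 : Fin d → ℝ) 1) volume :=
    (hk_integrand_cont d γ t y).integrableOn_Icc
  have hHi : IntegrableOn H (Set.Icc (0 : Fin d → ℝ) 1) volume :=
    (H_cont d (γ*t) i0).integrableOn_Icc
  have hpt : ∀ ξ ∈ Set.Icc (0 : Fin d → ℝ) 1, F ξ - G ξ ≤ H ξ := by
    intro ξ hξ
    have h0 : 0 ≤ ξ i0 := hξ.1 i0
    have h1 : ξ i0 ≤ 1 := hξ.2 i0
    have hsum : (2*Real.pi*∑ j, ξ j * (y j : ℝ))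
        = 2*Real.pi*(∑ j, ξ j * (x j : ℝ)) + 2*Real.pi*ξ i0 := by
      have : ∑ j, ξ j * (y j : ℝ)
          = (∑ j, ξ j * (x j : ℝ)) + ξ i0 := by
        simp only [hy, Pi.add_apply, Int.cast_add, mul_add, Finset.sum_add_distrib]
        congr 1
        have hterm : ∀ j : Fin d, ξ j * (((Pi.single i0 1 : Fin d → ℤ) j : ℤ) : ℝ)
            = if j = i0 then ξ j else 0 := by
          intro j; by_cases hj : j = i0 <;> simp [Pi.single_apply, hj]
        rw [Finset.sum_congr rfl fun j _ => hterm j, Finset.sum_ite_eq' Finset.univ i0]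
        simp
      rw [this]; ring
    have hcb : |Real.cos (2*Real.pi*∑ j, ξ j * (x j : ℝ))
        - Real.cos (2*Real.pi*∑ j, ξ j * (y j : ℝ))|
        ≤ 2*Real.pi * min (ξ i0) (1 - ξ i0) := by
      rw [hsum]
      exact cos_phase h0 h1
    have hexp : 0 < Real.exp (γ*t * alphaFn d ξ) := Real.exp_pos _
    calc F ξ - G ξ = Real.exp (γ*t * alphaFn d ξ) *
          (Real.cos (2*Real.pi*∑ j, ξ j * (x j : ℝ))
            - Real.cos (2*Real.pi*∑ j, ξ j * (y j : ℝ))) := by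
          rw [hF, hG]; ring
      _ ≤ Real.exp (γ*t * alphaFn d ξ) * (2*Real.pi * min (ξ i0) (1 - ξ i0)) :=
          mul_le_mul_of_nonneg_left (le_trans (le_abs_self _) hcb) hexp.le
      _ = H ξ := rfl
  have hdiff : heatKernel d γ t x - heatKernel d γ t y
      = ∫ ξ in Set.Icc (0 : Fin d → ℝ) 1, (F ξ - G ξ) := by
    rw [heatKernel, heatKernel, ← integral_sub hFi hGi]
  rw [hdiff]
  calc ∫ ξ in Set.Icc (0 : Fin d → ℝ) 1, (F ξ - G ξ)
      ≤ ∫ ξ in Set.Icc (0 : Fin d → ℝ) 1, H ξ :=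
        setIntegral_mono_on (hFi.sub hGi) hHi measurableSet_Icc hpt
    _ = 2*Real.pi * ∫ ξ in Set.Icc (0 : Fin d → ℝ) 1,
          Real.exp ((γ*t) * alphaFn d ξ) * min (ξ i0) (1 - ξ i0) := by
        rw [← MeasureTheory.integral_const_mul]
        exact setIntegral_congr_fun measurableSet_Icc fun ξ _ => by rw [hH]; ring
    _ ≤ 2*Real.pi * (γ*t) ^ (-(((d:ℝ)+1)/2)) := by
        have := key_bound d hd (s := γ*t) hs
        exact mul_le_mul_of_nonneg_left this (by positivity)


set_option maxHeartbeats 1000000 in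
lemma hk_tele (d : ℕ) (hd : 0 < d) {γ t : ℝ} (hγ : 0 < γ) (ht : 0 < t) (x : Fin d → ℤ)
    (L : ℕ) :
    heatKernel d γ t x - heatKernel d γ t (x + Pi.single ⟨0,hd⟩ (L:ℤ)) ≤
      (L:ℝ) * (2 * Real.pi * (γ*t) ^ (-(((d:ℝ)+1)/2))) := by
  induction L with
  | zero => simp
  | succ L ih =>
      have hsplit : x + Pi.single (⟨0,hd⟩ : Fin d) ((L+1:ℕ):ℤ)
          = (x + Pi.single (⟨0,hd⟩ : Fin d) (L:ℤ)) + Pi.single (⟨0,hd⟩ : Fin d) 1 := by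
        have hc : ((L+1:ℕ):ℤ) = (L:ℤ)+1 := by push_cast; ring
        rw [hc, add_assoc, ← Pi.single_add]
      rw [hsplit]
      have hstep := hk_grad d hd hγ ht (x + Pi.single (⟨0,hd⟩ : Fin d) (L:ℤ))
      push_cast
      linarith [ih, hstep]

/-- Drop of the crown-wise maximum of the ball-averaged heat kernel between the origin
and the crown at distance `L`: there is `c > 0` depending only on `d` such that
`p⁺_M(t,0) − p⁺_M(t,L) ≤ c L (γt)^{−(d+1)/2}` for all `γ, t > 0` and `M, L ∈ ℕ`. -/
theorem pPlus_drop_bound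
    (d : ℕ) (hd : 1 ≤ d) :
    ∃ c : ℝ, 0 < c ∧ ∀ γ t : ℝ, 0 < γ → 0 < t → ∀ M L : ℕ,
      pPlus d γ t M 0 - pPlus d γ t M L ≤
        c * (L : ℝ) * (γ * t) ^ (-(((d : ℝ) + 1) / 2)) := by
  classical
  have hd' : 0 < d := hd
  refine ⟨2*Real.pi, by positivity, ?_⟩
  intro γ t hγ ht M L
  have hs : 0 < γ * t := mul_pos hγ ht
  set i0 : Fin d := ⟨0, hd'⟩ with hi0
  set C := 2 * Real.pi * (γ*t) ^ (-(((d:ℝ)+1)/2)) with hCdef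
  have hC0 : 0 ≤ C := by
    apply mul_nonneg (by positivity)
    exact Real.rpow_nonneg hs.le _
  set zL : Fin d → ℤ := Pi.single i0 (L:ℤ) with hzL
  have htele : ∀ y : Fin d → ℤ,
      heatKernel d γ t y - heatKernel d γ t (y + zL) ≤ (L:ℝ) * C :=
    fun y => hk_tele d hd' hγ ht y L
  -- the ball is nonempty
  have hball : (0 : Fin d → ℤ) ∈ latticeBall d M := by
    rw [latticeBall, Finset.mem_filter]
    constructor
    · rw [Fintype.mem_piFinset]
      intro j
      rw [Finset.mem_Icc]
      simp
    · have h0 : enorm' d 0 = 0 := by simp [enorm']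
      rw [h0]
      exact_mod_cast Nat.cast_nonneg M
  have hcard : 0 < (latticeBall d M).card := Finset.card_pos.2 ⟨0, hball⟩
  have hcardR : (0:ℝ) < ((latticeBall d M).card : ℝ) := by exact_mod_cast hcard
  -- averaged difference
  have havg : pAvg d γ t M 0 - pAvg d γ t M zL ≤ (L:ℝ) * C := by
    rw [pAvg, pAvg, ← mul_sub, ← Finset.sum_sub_distrib]
    have hsum : ∑ y ∈ latticeBall d M,
        (heatKernel d γ t (0 + y) - heatKernel d γ t (zL + y)) ≤
        ((latticeBall d M).card : ℝ) * ((L:ℝ) * C) := by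
      calc ∑ y ∈ latticeBall d M,
            (heatKernel d γ t (0 + y) - heatKernel d γ t (zL + y))
          ≤ ∑ _y ∈ latticeBall d M, (L:ℝ) * C := by
            refine Finset.sum_le_sum fun y _ => ?_
            have := htele y
            rw [zero_add, add_comm zL y]
            exact this
        _ = ((latticeBall d M).card : ℝ) * ((L:ℝ) * C) := by
            rw [Finset.sum_const, nsmul_eq_mul]
    calc ((latticeBall d M).card : ℝ)⁻¹ * ∑ y ∈ latticeBall d M,
          (heatKernel d γ t (0 + y) - heatKernel d γ t (zL + y))
        ≤ ((latticeBall d M).card : ℝ)⁻¹ *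
            (((latticeBall d M).card : ℝ) * ((L:ℝ) * C)) :=
          mul_le_mul_of_nonneg_left hsum (by positivity)
      _ = (L:ℝ) * C := by field_simp
  -- crown 0 = {0}
  have hcrown0 : crown d 0 = {0} := by
    ext z
    rw [crown, Finset.mem_filter, Finset.mem_singleton]
    constructor
    · rintro ⟨hz, -⟩
      rw [Fintype.mem_piFinset] at hz
      funext j
      have := hz j
      rw [Finset.mem_Icc] at this
      simp only [Pi.zero_apply]
      omega
    · rintro rfl
      refine ⟨?_, ?_⟩
      · rw [Fintype.mem_piFinset]
        intro j
        rw [Finset.mem_Icc]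
        simp
      · have h0 : enorm' d 0 = 0 := by simp [enorm']
        rw [h0]
        norm_num
  have hp0 : pPlus d γ t M 0 = pAvg d γ t M 0 := by
    rw [pPlus, hcrown0]
    simp
  -- zL lies in crown L
  have henorm : enorm' d zL = (L:ℝ) := by
    rw [enorm']
    have hterm : ∀ j : Fin d, ((zL j : ℤ) : ℝ)^2 = if j = i0 then ((L:ℝ))^2 else 0 := by
      intro j
      by_cases hj : j = i0 <;> simp [hzL, Pi.single_apply, hj]
    rw [Finset.sum_congr rfl fun j _ => hterm j, Finset.sum_ite_eq' Finset.univ i0]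
    simp [Real.sqrt_sq (Nat.cast_nonneg L)]
  have hzc : zL ∈ crown d L := by
    rw [crown, Finset.mem_filter]
    refine ⟨?_, ?_, ?_⟩
    · rw [Fintype.mem_piFinset]
      intro j
      rw [Finset.mem_Icc, hzL, Pi.single_apply]
      split_ifs <;> omega
    · rw [henorm]; norm_num
    · rw [henorm]
  have hpL : pAvg d γ t M zL ≤ pPlus d γ t M L := by
    apply le_csSup
    · exact ((crown d L).finite_toSet.image _).bddAbove
    · exact Set.mem_image_of_mem _ (Finset.mem_coe.2 hzc)
  calc pPlus d γ t M 0 - pPlus d γ t M L ≤ pAvg d γ t M 0 - pAvg d γ t M zL := by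
        rw [hp0]; linarith
    _ ≤ (L:ℝ) * C := havg
    _ = 2*Real.pi * (L:ℝ) * (γ * t) ^ (-(((d:ℝ) + 1) / 2)) := by rw [hCdef]; ring

end
end
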